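/- arXiv:2403.20049 — 7 statements merged into one kernel-verified Lean document; each statement's English description precedes it below -/
import Mathlib

section
/- If two cycles of length g in G intersect and their intersection contains at least one edge, then the intersection is a connected subgraph. Moreover, if g is odd, the intersection of any two cycles of length g in G is connected or empty. -/
open SimpleGraph

/-- `c` is a cycle subgraph of `G` of length `g`. -/
def IsCycleSub {V : Type*} (G : SimpleGraph V) (g : ℕ) (c : G.Subgraph) : Prop :=
  ∃ (a : V) (w : G.Walk a a), w.IsCycle ∧ w.length = g ∧ c = w.toSubgraph

/-- `p` is a path subgraph of `G` on `n` vertices. -/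
def IsPathSub {V : Type*} (G : SimpleGraph V) (n : ℕ) (p : G.Subgraph) : Prop :=
  ∃ (a b : V) (w : G.Walk a b), w.IsPath ∧ w.length + 1 = n ∧ p = w.toSubgraph

/-- `G` is an edge-girth-regular `(v,k,g,λ)`-graph. -/
def IsEGR {V : Type*} (G : SimpleGraph V) (v k g lam : ℕ) : Prop :=
  Nat.card V = v ∧ (∀ x : V, (G.neighborSet x).ncard = k) ∧ G.girth = g ∧
  ∀ e ∈ G.edgeSet,
    {c : G.Subgraph | IsCycleSub G g c ∧ e ∈ c.edgeSet}.ncard = lam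

/-!
Let `x`, `y` be common vertices of two shortest cycles `C₁`, `C₂`. Each `Cᵢ` splits into two
`x`–`y` arcs; let `Pᵢ` be the shorter one, so `2 |Pᵢ| ≤ g`. If `P₁ ≠ P₂`, their union contains
a cycle of length at most `|P₁| + |P₂| ≤ g`, so equality holds throughout: `g` is even and `y`
is the vertex of `C₁` opposite to `x`. Otherwise `P₁ = P₂` joins `x` to `y` inside `C₁ ∩ C₂`.
So at most one common vertex, the antipode of `x` in `C₁`, can fail to be joined to `x`, and
none does when `g` is odd. If `C₁ ∩ C₂` contains an edge `uv`, then `u` and `v` are not both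
that exception, and the edge joins them.
-/

namespace SimpleGraph

variable {V : Type*} {G : SimpleGraph V} {x y : V}

namespace Walk

lemma toSubgraph_take_le (p : G.Walk x y) (n : ℕ) : (p.take n).toSubgraph ≤ p.toSubgraph := by
  conv_rhs => rw [← p.append_take_drop_eq n, toSubgraph_append]
  exact le_sup_left

lemma toSubgraph_drop_le (p : G.Walk x y) (n : ℕ) : (p.drop n).toSubgraph ≤ p.toSubgraph := by
  conv_rhs => rw [← p.append_take_drop_eq n, toSubgraph_append]
  exact le_sup_right

lemma IsCycle.exists_isPath_two_mul_length_le {c : G.Walk x x} (hc : c.IsCycle)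
    (hy : y ∈ c.support) (hyx : y ≠ x) :
    ∃ p : G.Walk x y, p.IsPath ∧ p.toSubgraph ≤ c.toSubgraph ∧ 2 * p.length ≤ c.length ∧
      (2 * p.length = c.length → c.getVert p.length = y) := by
  obtain ⟨n, rfl, hn⟩ := mem_support_iff_exists_getVert.mp hy
  have hn₀ : n ≠ 0 := by rintro rfl; exact hyx c.getVert_zero
  have hnl : n ≠ c.length := by rintro rfl; exact hyx c.getVert_length
  rcases le_or_gt (2 * n) c.length with h | h
  · have hlen : (c.take n).length = n := by rw [take_length, min_eq_left hn]
    exact ⟨c.take n, hc.isPath_take (by omega), c.toSubgraph_take_le n, by omega,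
      fun _ => by rw [hlen]⟩
  · have hlen : (c.drop n).reverse.length = c.length - n := by rw [length_reverse, drop_length]
    refine ⟨(c.drop n).reverse, (hc.isPath_drop (by omega)).reverse, ?_, by omega, by omega⟩
    rw [toSubgraph_reverse]
    exact c.toSubgraph_drop_le n

end Walk

lemma Subgraph.reachable_of_toSubgraph_le {H : G.Subgraph} (p : G.Walk x y)
    (h : p.toSubgraph ≤ H) (hx : x ∈ H.verts) (hy : y ∈ H.verts) :
    H.coe.Reachable ⟨x, hx⟩ ⟨y, hy⟩ :=
  (p.toSubgraph_connected ⟨_, p.start_mem_verts_toSubgraph⟩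
    ⟨_, p.end_mem_verts_toSubgraph⟩).map (Subgraph.inclusion h)

theorem exists_walk_le_inf_or_getVert_girth_div_two_eq {c₁ c₂ : G.Walk x x} (hc₁ : c₁.IsCycle)
    (hc₂ : c₂.IsCycle) (hl₁ : c₁.length = G.girth) (hl₂ : c₂.length = G.girth)
    (hy₁ : y ∈ c₁.support) (hy₂ : y ∈ c₂.support) :
    (∃ r : G.Walk x y, r.toSubgraph ≤ c₁.toSubgraph ⊓ c₂.toSubgraph) ∨
      (Even G.girth ∧ c₁.getVert (G.girth / 2) = y) := by
  rcases eq_or_ne y x with rfl | hyx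
  · exact Or.inl ⟨.nil, by simp⟩
  obtain ⟨p₁, hp₁, hsub₁, hle₁, hvert₁⟩ := hc₁.exists_isPath_two_mul_length_le hy₁ hyx
  obtain ⟨p₂, hp₂, hsub₂, hle₂, -⟩ := hc₂.exists_isPath_two_mul_length_le hy₂ hyx
  by_cases hp : p₁ = p₂
  · subst hp
    exact Or.inl ⟨p₁, le_inf hsub₁ hsub₂⟩
  obtain ⟨_, -, -, c, hc, hcl⟩ := hp₁.exists_isCycle_length_le_add_of_ne hp₂ hp
  have hgirth := girth_le_length hc
  have hhalf : p₁.length = G.girth / 2 := by omega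
  exact Or.inr ⟨⟨p₁.length, by omega⟩, hhalf ▸ hvert₁ (by omega)⟩

end SimpleGraph

namespace IsCycleSub

variable {V : Type*} {G : SimpleGraph V} {g : ℕ} {c c₁ c₂ : G.Subgraph} {x y z : V}

lemma exists_isCycle_walk_of_mem_verts (hc : IsCycleSub G g c) (hx : x ∈ c.verts) :
    ∃ w : G.Walk x x, w.IsCycle ∧ w.length = g ∧ c = w.toSubgraph := by
  classical
  obtain ⟨a, w, hw, rfl, rfl⟩ := hc
  rw [Walk.mem_verts_toSubgraph] at hx
  exact ⟨w.rotate x hx, hw.rotate hx, w.length_rotate x hx, (w.toSubgraph_rotate hx).symm⟩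

theorem exists_forall_reachable_or_even_girth_and_eq (h₁ : IsCycleSub G G.girth c₁)
    (h₂ : IsCycleSub G G.girth c₂) (hx : x ∈ (c₁ ⊓ c₂).verts) :
    ∃ a : V, ∀ y (hy : y ∈ (c₁ ⊓ c₂).verts),
      (c₁ ⊓ c₂).coe.Reachable ⟨x, hx⟩ ⟨y, hy⟩ ∨ (Even G.girth ∧ y = a) := by
  obtain ⟨w₁, hw₁, hl₁, rfl⟩ := h₁.exists_isCycle_walk_of_mem_verts hx.1
  obtain ⟨w₂, hw₂, hl₂, rfl⟩ := h₂.exists_isCycle_walk_of_mem_verts hx.2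
  refine ⟨w₁.getVert (G.girth / 2), fun y hy => ?_⟩
  rcases exists_walk_le_inf_or_getVert_girth_div_two_eq hw₁ hw₂ hl₁ hl₂
      (w₁.mem_verts_toSubgraph.mp hy.1) (w₂.mem_verts_toSubgraph.mp hy.2) with
    ⟨r, hr⟩ | ⟨heven, hy⟩
  · exact Or.inl (Subgraph.reachable_of_toSubgraph_le r hr _ _)
  · exact Or.inr ⟨heven, hy.symm⟩

theorem eq_of_not_reachable (h₁ : IsCycleSub G G.girth c₁) (h₂ : IsCycleSub G G.girth c₂)
    (hx : x ∈ (c₁ ⊓ c₂).verts) (hy : y ∈ (c₁ ⊓ c₂).verts) (hz : z ∈ (c₁ ⊓ c₂).verts)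
    (hxy : ¬(c₁ ⊓ c₂).coe.Reachable ⟨x, hx⟩ ⟨y, hy⟩)
    (hxz : ¬(c₁ ⊓ c₂).coe.Reachable ⟨x, hx⟩ ⟨z, hz⟩) : y = z := by
  obtain ⟨a, ha⟩ := h₁.exists_forall_reachable_or_even_girth_and_eq h₂ hx
  exact ((ha y hy).resolve_left hxy).2.trans ((ha z hz).resolve_left hxz).2.symm

theorem reachable_of_odd_girth (h₁ : IsCycleSub G G.girth c₁) (h₂ : IsCycleSub G G.girth c₂)
    (hodd : Odd G.girth) (hx : x ∈ (c₁ ⊓ c₂).verts) (hy : y ∈ (c₁ ⊓ c₂).verts) :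
    (c₁ ⊓ c₂).coe.Reachable ⟨x, hx⟩ ⟨y, hy⟩ := by
  obtain ⟨a, ha⟩ := h₁.exists_forall_reachable_or_even_girth_and_eq h₂ hx
  exact (ha y hy).resolve_right fun h => Nat.not_even_iff_odd.mpr hodd h.1

end IsCycleSub

/-- In an egr(v,k,g,λ)-graph, if two shortest cycles intersect in at least one edge then
the intersection is connected; if g is odd the intersection is connected or empty. -/
theorem stmt_2 {V : Type*} (G : SimpleGraph V) (v k g lam : ℕ)
    (hG : IsEGR G v k g lam)
    (c₁ c₂ : G.Subgraph) (h₁ : IsCycleSub G g c₁) (h₂ : IsCycleSub G g c₂) :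
    ((c₁ ⊓ c₂).edgeSet.Nonempty → (c₁ ⊓ c₂).Connected) ∧
    (Odd g → (c₁ ⊓ c₂).Connected ∨ (c₁ ⊓ c₂).verts = ∅) := by
  obtain ⟨-, -, rfl, -⟩ := hG
  refine ⟨fun ⟨e, he⟩ => ?_, fun hodd => ?_⟩
  · induction e using Sym2.ind with | _ u w =>
    have huw : (c₁ ⊓ c₂).Adj u w := he
    have hu := (c₁ ⊓ c₂).edge_vert huw
    have hw := (c₁ ⊓ c₂).edge_vert huw.symm
    have hreach (s : V) (hs : s ∈ (c₁ ⊓ c₂).verts) :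
        (c₁ ⊓ c₂).coe.Reachable ⟨s, hs⟩ ⟨u, hu⟩ := by
      by_contra hsu
      refine huw.ne (h₁.eq_of_not_reachable h₂ hs hu hw hsu fun hsw => hsu ?_)
      exact hsw.trans (Adj.reachable huw.symm)
    exact Subgraph.connected_iff.mpr
      ⟨⟨fun s t => (hreach _ s.2).trans (hreach _ t.2).symm⟩, u, hu⟩
  · rcases (c₁ ⊓ c₂).verts.eq_empty_or_nonempty with h | h
    · exact Or.inr h
    · exact Or.inl (Subgraph.connected_iff.mpr
        ⟨⟨fun s t => h₁.reachable_of_odd_girth h₂ hodd s.2 t.2⟩, h⟩)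
end

section
/- Every path subgraph of G on 3 vertices is contained in exactly t cycles of length g. -/
open SimpleGraph

/-!
Let `b` be the middle vertex of the path and `x, y, z` its neighbours. A `g`-cycle through `b` uses
exactly two of the three edges at `b`, so if `N(u, w)` counts the `g`-cycles through
`u - b - w`, the `2t` cycles on the edge `bu` split as `N(u, w) + N(u, w') = 2t`. These three
equations force `N(u, w) = t` for every pair. Local finiteness (from 3-regularity) makes the
counted sets finite, so that `ncard` is additive on them.
-/

lemma Set.exists_eq_insert_insert_singleton_of_ncard_eq_three {α : Type*} {s : Set α} {a c : α}
    (hs : s.ncard = 3) (ha : a ∈ s) (hc : c ∈ s) (hac : a ≠ c) :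
    ∃ d, s = {a, c, d} ∧ d ≠ a ∧ d ≠ c := by
  have hsub : ({a, c} : Set α) ⊆ s := Set.insert_subset ha (Set.singleton_subset_iff.mpr hc)
  obtain ⟨d, hd⟩ : ∃ d, s \ {a, c} = {d} := by
    rw [← Set.ncard_eq_one, Set.ncard_sdiff hsub, hs, Set.ncard_pair hac]
  have hds : d ∈ s \ {a, c} := hd ▸ rfl
  refine ⟨d, ?_, fun h => hds.2 (.inl h), fun h => hds.2 (.inr h)⟩
  rw [← Set.union_sdiff_cancel hsub, hd]
  ext
  simp only [Set.mem_union, Set.mem_insert_iff, Set.mem_singleton_iff]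
  tauto

section

variable {V : Type*} {G : SimpleGraph V}

lemma IsCycleSub.ncard_neighborSet_eq_two {g : ℕ} {c : G.Subgraph} (hc : IsCycleSub G g c)
    {b : V} (hb : b ∈ c.verts) : (c.neighborSet b).ncard = 2 := by
  obtain ⟨a, w, hw, -, rfl⟩ := hc
  exact hw.ncard_neighborSet_toSubgraph_eq_two (w.mem_verts_toSubgraph.mp hb)

lemma SimpleGraph.Subgraph.adj_xor_adj_of_ncard_neighborSet_eq_two {H : G.Subgraph} {b x y z : V}
    (hN : G.neighborSet b = {x, y, z}) (hxy : x ≠ y) (hxz : x ≠ z) (hyz : y ≠ z)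
    (hH : (H.neighborSet b).ncard = 2) (hx : H.Adj b x) : Xor (H.Adj b y) (H.Adj b z) := by
  obtain ⟨p, q, hpq, hpqH⟩ := Set.ncard_eq_two.mp hH
  have hHadj : ∀ u, H.Adj b u ↔ u = p ∨ u = q := fun u => by
    rw [← Subgraph.mem_neighborSet, hpqH]; rfl
  have hGadj : ∀ u, H.Adj b u → u = x ∨ u = y ∨ u = z := fun u hu => by
    simpa [hN] using show u ∈ G.neighborSet b from H.adj_sub hu
  have hp := hGadj p ((hHadj p).2 (.inl rfl))
  have hq := hGadj q ((hHadj q).2 (.inr rfl))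
  rw [hHadj] at hx
  rw [Xor, hHadj, hHadj]
  rcases hp with rfl | rfl | rfl <;> rcases hq with rfl | rfl | rfl <;> tauto

lemma finite_setOf_isCycleSub_mem_verts [G.LocallyFinite] (g : ℕ) (b : V) :
    {c : G.Subgraph | IsCycleSub G g c ∧ b ∈ c.verts}.Finite := by
  classical
  refine ((G.finsetWalkLength g b b).finite_toSet.image Walk.toSubgraph).subset ?_
  rintro _ ⟨⟨a, w, -, hlen, rfl⟩, hb⟩
  have hbw : b ∈ w.support := w.mem_verts_toSubgraph.mp hb
  exact ⟨w.rotate b hbw, by simp [mem_finsetWalkLength_iff, hlen], w.toSubgraph_rotate hbw⟩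

def cyclesThroughPath (G : SimpleGraph V) (g : ℕ) (x b y : V) : Set G.Subgraph :=
  {c | IsCycleSub G g c ∧ c.Adj b x ∧ c.Adj b y}

lemma cyclesThroughPath_comm (g : ℕ) (x b y : V) :
    cyclesThroughPath G g x b y = cyclesThroughPath G g y b x := by
  ext c
  simp only [cyclesThroughPath, Set.mem_ofPred_eq, and_comm (a := c.Adj b x)]

lemma ncard_setOf_isCycleSub_mem_edgeSet_eq_add [G.LocallyFinite] {g : ℕ} {b x y z : V}
    (hN : G.neighborSet b = {x, y, z}) (hxy : x ≠ y) (hxz : x ≠ z) (hyz : y ≠ z) :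
    {c : G.Subgraph | IsCycleSub G g c ∧ s(b, x) ∈ c.edgeSet}.ncard =
      (cyclesThroughPath G g x b y).ncard + (cyclesThroughPath G g x b z).ncard := by
  have hxor : ∀ c, IsCycleSub G g c → c.Adj b x → Xor (c.Adj b y) (c.Adj b z) :=
    fun c hc hx => Subgraph.adj_xor_adj_of_ncard_neighborSet_eq_two hN hxy hxz hyz
      (hc.ncard_neighborSet_eq_two (c.edge_vert hx)) hx
  have hfin : ∀ u, (cyclesThroughPath G g x b u).Finite := fun u =>
    (finite_setOf_isCycleSub_mem_verts g b).subset fun c hc => ⟨hc.1, c.edge_vert hc.2.1⟩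
  have hunion : {c : G.Subgraph | IsCycleSub G g c ∧ s(b, x) ∈ c.edgeSet} =
      cyclesThroughPath G g x b y ∪ cyclesThroughPath G g x b z := by
    ext c
    simp only [cyclesThroughPath, Subgraph.mem_edgeSet, Set.mem_ofPred_eq, Set.mem_union]
    constructor
    · rintro ⟨hc, hx⟩
      rcases hxor c hc hx with ⟨hy, -⟩ | ⟨hz, -⟩
      exacts [.inl ⟨hc, hx, hy⟩, .inr ⟨hc, hx, hz⟩]
    · rintro (⟨hc, hx, -⟩ | ⟨hc, hx, -⟩) <;> exact ⟨hc, hx⟩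
  have hdisj : Disjoint (cyclesThroughPath G g x b y) (cyclesThroughPath G g x b z) :=
    Set.disjoint_left.mpr fun c ⟨hc, hx, hy⟩ ⟨_, _, hz⟩ => by
      rcases hxor c hc hx with ⟨-, h⟩ | ⟨-, h⟩ <;> contradiction
  rw [hunion, Set.ncard_union_eq hdisj (hfin y) (hfin z)]

lemma ncard_cyclesThroughPath_eq [G.LocallyFinite] {g t : ℕ} {b x y z : V}
    (hN : G.neighborSet b = {x, y, z}) (hxy : x ≠ y) (hxz : x ≠ z) (hyz : y ≠ z)
    (hedge : ∀ u ∈ G.neighborSet b,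
      {c : G.Subgraph | IsCycleSub G g c ∧ s(b, u) ∈ c.edgeSet}.ncard = 2 * t) :
    (cyclesThroughPath G g x b y).ncard = t := by
  have hx := hedge x (by simp [hN])
  have hy := hedge y (by simp [hN])
  have hz := hedge z (by simp [hN])
  rw [ncard_setOf_isCycleSub_mem_edgeSet_eq_add hN hxy hxz hyz] at hx
  rw [ncard_setOf_isCycleSub_mem_edgeSet_eq_add (x := y) (y := x) (z := z)
    (by rw [hN, Set.insert_comm]) hxy.symm hyz hxz, cyclesThroughPath_comm g y] at hy
  rw [ncard_setOf_isCycleSub_mem_edgeSet_eq_add (x := z) (y := x) (z := y)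
    (by rw [hN, Set.pair_comm y z, Set.insert_comm]) hxz.symm hyz.symm hxy,
    cyclesThroughPath_comm g z, cyclesThroughPath_comm g z] at hz
  omega

lemma IsPathSub.exists_le_iff_adj_adj {p : G.Subgraph} (hp : IsPathSub G 3 p) :
    ∃ a b c : V, G.Adj b a ∧ G.Adj b c ∧ a ≠ c ∧
      ∀ H : G.Subgraph, p ≤ H ↔ H.Adj b a ∧ H.Adj b c := by
  obtain ⟨a, c, w, hw, hlen, rfl⟩ := hp
  rcases w with _ | ⟨h1, _ | ⟨h2, _ | ⟨h3, w⟩⟩⟩ <;>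
    simp only [Walk.length_cons, Walk.length_nil] at hlen <;> try omega
  refine ⟨_, _, _, h1.symm, h2, ?_, fun H => ?_⟩
  · rintro rfl
    simp at hw
  · rw [Walk.toSubgraph_le_iff Walk.not_nil_cons]
    simp [Set.insert_subset_iff, Subgraph.adj_comm]

end

/-- In an egr(v,3,g,2t)-graph, every path subgraph on 3 vertices lies on exactly t shortest
cycles. -/
theorem stmt_8 {V : Type*} (G : SimpleGraph V) (v g t : ℕ)
    (hG : IsEGR G v 3 g (2 * t))
    (p : G.Subgraph) (hp : IsPathSub G 3 p) :
    {c : G.Subgraph | IsCycleSub G g c ∧ p ≤ c}.ncard = t := by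
  obtain ⟨-, hdeg, -, hedge⟩ := hG
  have : G.LocallyFinite := fun x => (Set.finite_of_ncard_ne_zero (by simp [hdeg x])).fintype
  obtain ⟨a, b, c, hba, hbc, hac, hle⟩ := hp.exists_le_iff_adj_adj
  obtain ⟨d, hN, hda, hdc⟩ :=
    Set.exists_eq_insert_insert_singleton_of_ncard_eq_three (hdeg b) hba hbc hac
  have hcycles : {c : G.Subgraph | IsCycleSub G g c ∧ p ≤ c} = cyclesThroughPath G g a b c := by
    ext H
    simp only [cyclesThroughPath, Set.mem_ofPred_eq, hle]
  rw [hcycles]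
  exact ncard_cyclesThroughPath_eq hN hac hda.symm hdc.symm fun u hu => hedge _ hu
end

section
/- If λ > 2^{⌈(g−5)/2⌉}, then G is 3-edge-connected. -/
open SimpleGraph

/-!
If deleting at most two edges disconnects `G`, then some edge `e₁ = s(u, y)` has the property that
every girth cycle through it also passes through a second edge `e₂` (a single edge cannot be a
bridge, since it lies on `λ > 0` girth cycles). Such a cycle consists of `e₁`, an arc from `y` to
`e₂`, the edge `e₂` and an arc from `e₂` back to `u`. Two distinct paths with common ends have total
length at least the girth `g`, so the arc of length at most `(g - 2) / 2` in one of these cycles is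
an arc of all of them. Hence some edge `f ≠ e₁` at an endpoint `x` of `e₁` lies on every girth cycle
through `e₁`. A girth cycle through the third edge at `x` cannot contain `e₁` (it would then meet
`x` in three edges), so it contains `f`, and `f` lies on more girth cycles than `e₁`.
-/

namespace SimpleGraph

variable {V : Type*} {G : SimpleGraph V}

open Walk

namespace Walk

lemma exists_eq_append_cons_of_mem_edges {u v : V} {p : G.Walk u v} {e : Sym2 V}
    (he : e ∈ p.edges) :
    ∃ (a b : V) (q : G.Walk u a) (h : G.Adj a b) (r : G.Walk b v),
      e = s(a, b) ∧ p = q.append (cons h r) := by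
  induction p with
  | nil => simp at he
  | cons h p ih =>
    rcases List.mem_cons.mp he with rfl | he
    · exact ⟨_, _, nil, h, p, rfl, rfl⟩
    · obtain ⟨a, b, q, h', r, rfl, rfl⟩ := ih he
      exact ⟨a, b, cons h q, h', r, rfl, rfl⟩

theorem IsPath.girth_le_length_add_length {u v : V} {p q : G.Walk u v} (hp : p.IsPath)
    (hq : q.IsPath) (hpq : p ≠ q) : G.girth ≤ p.length + q.length := by
  classical
  induction p with
  | nil => exact absurd (isPath_iff_nil.mp hq).eq_nil.symm hpq
  | @cons u a v h p ih =>
    cases q with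
    | nil => exact absurd (isPath_iff_nil.mp hp) not_nil_cons
    | @cons _ b _ h' q =>
      obtain ⟨hp, hup⟩ := cons_isPath_iff h p |>.mp hp
      by_cases hab : a = b
      · subst hab
        have := ih hp ((cons_isPath_iff h' q).mp hq).1 (fun h => hpq (by rw [h]))
        simp only [length_cons]
        omega
      · -- `u a … v … b u` is a closed walk whose first edge is not used again, so bypassing
        -- its repeated vertices yields a cycle
        have hfirst : s(u, a) ∉ (p.append (cons h' q).reverse).edges := by
          rw [edges_append, List.mem_append, edges_reverse, List.mem_reverse, not_or]
          exact ⟨fun hm => hup (p.fst_mem_support_of_mem_edges hm),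
            fun hm => hab (by simpa using hq.eq_snd_of_mem_edges hm)⟩
        have hcyc : (cons h (p.append (cons h' q).reverse).bypass).IsCycle :=
          (cons_isCycle_iff _ h).mpr
            ⟨bypass_isPath _, fun hm => hfirst (edges_bypass_subset_edges _ hm)⟩
        have := girth_le_length hcyc
        have := length_bypass_le_length (p.append (cons h' q).reverse)
        simp only [length_cons, length_append, length_reverse] at *
        omega

end Walk

lemma Preconnected.of_forall_adj_reachable {H : SimpleGraph V} (hG : G.Preconnected)
    (h : ∀ ⦃a b : V⦄, G.Adj a b → H.Reachable a b) : H.Preconnected := by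
  intro u v
  obtain ⟨p⟩ := hG u v
  induction p with
  | nil => rfl
  | cons hadj _ ih => exact (h hadj).trans ih

lemma reachable_deleteEdges_of_isCycle {s : Set (Sym2 V)} {a b x : V} {W : G.Walk x x}
    (hW : W.IsCycle) (hab : s(a, b) ∈ W.edges) (hs : ∀ e ∈ s, e ∈ W.edges → e = s(a, b)) :
    (G.deleteEdges s).Reachable a b := by
  have hW' : ∀ e ∈ W.edges, e ∉ s \ {s(a, b)} := fun e he hes => hes.2 (hs e hes.1 he)
  have key := adj_and_reachable_delete_edges_iff_exists_cycle.mpr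
    ⟨x, W.toDeleteEdges _ hW', hW.toDeleteEdges G _ hW', by simpa using hab⟩
  rw [deleteEdges_deleteEdges, Set.sdiff_union_self] at key
  exact key.2.mono (deleteEdges_anti Set.subset_union_left)

lemma isEdgeConnected_three_of_forall_exists_isCycle (hG : G.Preconnected)
    (h : ∀ d ∈ G.edgeSet, ∀ e, ∃ (x : V) (W : G.Walk x x),
      W.IsCycle ∧ d ∈ W.edges ∧ (e ∈ W.edges → e = d)) :
    G.IsEdgeConnected 3 := by
  rw [isEdgeConnected_add_one (by norm_num)]
  intro e
  rw [isEdgeConnected_two]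
  intro e'
  rw [deleteEdges_deleteEdges, Set.singleton_union]
  refine hG.of_forall_adj_reachable fun a b hab => ?_
  by_cases hs : s(a, b) ∈ ({e, e'} : Set (Sym2 V))
  · obtain ⟨o, ho⟩ : ∃ o, ({e, e'} : Set (Sym2 V)) = {s(a, b), o} := by
      rcases hs with rfl | rfl
      exacts [⟨e', rfl⟩, ⟨e, Set.pair_comm _ _⟩]
    obtain ⟨x, W, hW, hmem, hother⟩ := h s(a, b) hab o
    refine reachable_deleteEdges_of_isCycle hW hmem fun d hd hdW => ?_
    rw [ho] at hd
    rcases hd with rfl | rfl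
    exacts [rfl, hother hdW]
  · exact (deleteEdges_adj.mpr ⟨hab, hs⟩).reachable

def cyclesThrough (G : SimpleGraph V) (g : ℕ) (e : Sym2 V) : Set G.Subgraph :=
  {c | IsCycleSub G g c ∧ e ∈ c.edgeSet}

lemma _root_.IsCycleSub.ncard_neighborSet {g : ℕ} {c : G.Subgraph} (hc : IsCycleSub G g c) {x : V}
    (hx : x ∈ c.verts) : (c.neighborSet x).ncard = 2 := by
  obtain ⟨a, W, hW, -, rfl⟩ := hc
  exact hW.ncard_neighborSet_toSubgraph_eq_two ((mem_verts_toSubgraph W).mp hx)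

lemma _root_.IsCycleSub.exists_cons_eq {g : ℕ} {c : G.Subgraph} (hc : IsCycleSub G g c) {u y : V}
    (h : s(u, y) ∈ c.edgeSet) :
    ∃ (huy : G.Adj u y) (P : G.Walk y u),
      (cons huy P).IsCycle ∧ P.length + 1 = g ∧ c = (cons huy P).toSubgraph := by
  classical
  obtain ⟨x, W, hW, rfl, rfl⟩ := hc
  have hu : u ∈ W.support := W.fst_mem_support_of_mem_edges (by simpa using h)
  have hy : y ∈ (W.rotate u hu).toSubgraph.neighborSet u := by
    rw [toSubgraph_rotate]; exact h
  rw [(hW.rotate hu).neighborSet_toSubgraph_endpoint] at hy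
  obtain ⟨C, hC, rfl, hlen, hsub⟩ : ∃ C : G.Walk u u,
      C.IsCycle ∧ C.snd = y ∧ C.length = W.length ∧ C.toSubgraph = W.toSubgraph := by
    rcases hy with rfl | rfl
    · exact ⟨_, hW.rotate hu, rfl, by simp, toSubgraph_rotate ..⟩
    · exact ⟨_, (hW.rotate hu).reverse, snd_reverse _, by simp,
        by rw [toSubgraph_reverse, toSubgraph_rotate]⟩
  refine ⟨C.adj_snd hC.not_nil, C.tail, ?_, ?_, ?_⟩
  · rwa [cons_tail_eq _ hC.not_nil]
  · rw [length_tail_add_one hC.not_nil, hlen]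
  · rw [cons_tail_eq _ hC.not_nil, hsub]

lemma eq_of_length_add_eq_girth {y u α β : V} {R R₀ : G.Walk y α} {T T₀ : G.Walk β u}
    (hR : R.IsPath) (hR₀ : R₀.IsPath) (hT : T.IsPath) (hT₀ : T₀.IsPath)
    (hlen : R.length + T.length + 2 = G.girth) (hlen₀ : R₀.length + T₀.length + 2 = G.girth)
    (hshort : 2 * T₀.length + 2 ≤ G.girth) : T = T₀ := by
  by_contra hne
  have hTT := hT.girth_le_length_add_length hT₀ hne
  by_cases hRR : R = R₀
  · subst hRR
    omega
  · have := hR.girth_le_length_add_length hR₀ hRR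
    omega

lemma false_of_swapped_arcs {y u α β : V} {R : G.Walk y α} {T : G.Walk β u}
    {R₀ : G.Walk y β} {T₀ : G.Walk α u} (h : G.Adj α β) (h₀ : G.Adj β α)
    (hP : (R.append (cons h T)).IsPath) (hP₀ : (R₀.append (cons h₀ T₀)).IsPath)
    (hlen : R.length + T.length + 2 = G.girth) (hlen₀ : R₀.length + T₀.length + 2 = G.girth) :
    False := by
  -- `cons h T` and `R.concat h` have the ends of `T₀` and `R₀` but, unlike them, contain `s(α, β)`
  have hnodup := hP₀.isTrail.edges_nodup
  simp only [edges_append, edges_cons, List.nodup_append, List.nodup_cons, List.mem_cons] at hnodup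
  have hR₀ : s(α, β) ∉ R₀.edges := fun hm => hnodup.2.2 _ hm _ (.inl Sym2.eq_swap) rfl
  have hT₀ : s(α, β) ∉ T₀.edges := by rw [Sym2.eq_swap]; exact hnodup.2.1.1
  have h₂ := hP.of_append_right.girth_le_length_add_length
    ((cons_isPath_iff _ _).mp hP₀.of_append_right).1 (fun heq => hT₀ (heq ▸ by simp))
  rw [← concat_append] at hP
  have h₁ := hP.of_append_left.girth_le_length_add_length hP₀.of_append_left
    (fun heq => hR₀ (heq ▸ by simp [edges_concat]))
  simp only [length_concat, length_cons] at h₁ h₂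
  omega

lemma exists_cyclesThrough_subset_of_short_arc {u y α β : V} {R₀ : G.Walk y α}
    {T₀ : G.Walk β u} (h₀ : G.Adj α β) (hP₀ : (R₀.append (cons h₀ T₀)).IsPath)
    (huy : s(u, y) ∉ (R₀.append (cons h₀ T₀)).edges)
    (hlen₀ : R₀.length + T₀.length + 2 = G.girth) (hshort : 2 * T₀.length + 2 ≤ G.girth)
    (hsub : cyclesThrough G G.girth s(u, y) ⊆ cyclesThrough G G.girth s(α, β)) :
    ∃ z, G.Adj u z ∧ z ≠ y ∧
      cyclesThrough G G.girth s(u, y) ⊆ cyclesThrough G G.girth s(u, z) := by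
  -- splitting any girth cycle through `s(u, y)` at `s(α, β)`, the girth forces its arc at `u`
  -- to be `T₀`, so the last edge of `cons h₀ T₀` is on all of them
  have hT₀ := ((cons_isPath_iff _ _).mp hP₀.of_append_right).1
  have hlast := mk_penultimate_end_mem_edges (not_nil_cons (h := h₀) (p := T₀))
  refine ⟨(cons h₀ T₀).penultimate, (adj_penultimate not_nil_cons).symm, ?_, ?_⟩
  · rintro hz
    rw [hz, Sym2.eq_swap] at hlast
    exact huy (by rw [edges_append]; exact List.mem_append_right _ hlast)
  intro c ⟨hc, he⟩
  refine ⟨hc, ?_⟩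
  have hαβ := (hsub ⟨hc, he⟩).2
  obtain ⟨h, P, hcyc, hlen, rfl⟩ := hc.exists_cons_eq he
  obtain ⟨hP, -⟩ := (cons_isCycle_iff _ _).mp hcyc
  rw [edgeSet_toSubgraph, Walk.mem_edgeSet, edges_cons, List.mem_cons] at hαβ ⊢
  rcases hαβ with hαβ | hαβ
  · exact absurd (by rw [edges_append]; simp [hαβ]) huy
  obtain ⟨a, b, R, h', T, hab, rfl⟩ := exists_eq_append_cons_of_mem_edges hαβ
  simp only [length_append, length_cons] at hlen
  have hT := ((cons_isPath_iff _ _).mp hP.of_append_right).1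
  rcases Sym2.eq_iff.mp hab with ⟨rfl, rfl⟩ | ⟨rfl, rfl⟩
  · obtain rfl := eq_of_length_add_eq_girth hP.of_append_left hP₀.of_append_left hT hT₀
      (by omega) hlen₀ hshort
    right
    rw [edges_append, Sym2.eq_swap]
    exact List.mem_append_right _ hlast
  · exact (false_of_swapped_arcs h' h₀ hP hP₀ (by omega) hlen₀).elim

lemma exists_adj_cyclesThrough_subset {u y : V} {e : Sym2 V} (hne : s(u, y) ≠ e)
    (hc₀ : (cyclesThrough G G.girth s(u, y)).Nonempty)
    (hsub : cyclesThrough G G.girth s(u, y) ⊆ cyclesThrough G G.girth e) :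
    ∃ x y' z, s(u, y) = s(x, y') ∧ G.Adj x z ∧ z ≠ y' ∧
      cyclesThrough G G.girth s(x, y') ⊆ cyclesThrough G G.girth s(x, z) := by
  obtain ⟨c₀, hc₀, he₀⟩ := hc₀
  have he := (hsub ⟨hc₀, he₀⟩).2
  obtain ⟨h, P₀, hcyc, hlen, rfl⟩ := hc₀.exists_cons_eq he₀
  obtain ⟨hP₀, huy⟩ := (cons_isCycle_iff _ _).mp hcyc
  rw [edgeSet_toSubgraph, Walk.mem_edgeSet, edges_cons, List.mem_cons] at he
  obtain ⟨α, β, R₀, h₀, T₀, rfl, rfl⟩ :=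
    exists_eq_append_cons_of_mem_edges (he.resolve_left hne.symm)
  simp only [length_append, length_cons] at hlen
  rcases le_total T₀.length R₀.length with hTR | hRT
  · obtain ⟨z, hz, hzy, hsub'⟩ :=
      exists_cyclesThrough_subset_of_short_arc h₀ hP₀ huy (by omega) (by omega) hsub
    exact ⟨u, y, z, rfl, hz, hzy, hsub'⟩
  · -- the short arc is at `y`: read the cycle backwards
    have hrev : (R₀.append (cons h₀ T₀)).reverse = T₀.reverse.append (cons h₀.symm R₀.reverse) := by
      rw [reverse_append, reverse_cons, ← append_assoc, cons_nil_append]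
    rw [Sym2.eq_swap (a := u), Sym2.eq_swap (a := α)] at hsub
    have hyu : s(y, u) ∉ (T₀.reverse.append (cons h₀.symm R₀.reverse)).edges := by
      rwa [← hrev, edges_reverse, List.mem_reverse, Sym2.eq_swap]
    obtain ⟨z, hz, hzu, hsub'⟩ := exists_cyclesThrough_subset_of_short_arc h₀.symm
      (hrev ▸ hP₀.reverse) hyu (by simp only [length_reverse]; omega)
      (by simp only [length_reverse]; omega) hsub
    exact ⟨y, u, z, Sym2.eq_swap, hz, hzu, hsub'⟩

lemma not_cyclesThrough_subset {g lam : ℕ} {x y z : V} (hdeg : (G.neighborSet x).ncard = 3)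
    (hy : G.Adj x y) (hz : G.Adj x z) (hyz : y ≠ z)
    (hcnt : ∀ e ∈ G.edgeSet, (cyclesThrough G g e).ncard = lam) (hlam : 0 < lam) :
    ¬ cyclesThrough G g s(x, y) ⊆ cyclesThrough G g s(x, z) := by
  intro hsub
  obtain ⟨w, hw⟩ : ∃ w, G.neighborSet x \ {y, z} = {w} := by
    rw [← Set.ncard_eq_one, Set.ncard_sdiff (by simp [Set.insert_subset_iff, hy, hz]),
      hdeg, Set.ncard_pair hyz]
  have hwN : w ∈ G.neighborSet x \ {y, z} := hw ▸ rfl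
  have hN : ∀ t ∈ G.neighborSet x, t = y ∨ t = z ∨ t = w := fun t ht => by
    by_cases hyz' : t ∈ ({y, z} : Set V)
    · exact or_assoc.mp (.inl hyz')
    · exact .inr (.inr (hw ▸ ⟨ht, hyz'⟩ : t ∈ ({w} : Set V)))
  obtain ⟨c, hc, hxw⟩ := Set.nonempty_of_ncard_ne_zero ((hcnt s(x, w) hwN.1).trans_ne hlam.ne')
  have hc2 := hc.ncard_neighborSet (Subgraph.mem_verts_of_mem_edge hxw (Sym2.mem_mk_left x w))
  have hcfin := Set.finite_of_ncard_ne_zero (hc2.trans_ne two_ne_zero)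
  have hcN : c.neighborSet x ⊆ G.neighborSet x := fun t ht => Subgraph.Adj.adj_sub ht
  rw [Subgraph.mem_edgeSet] at hxw
  -- `c` passes through `x` along exactly two of the three edges at `x`, one of them `s(x, w)`
  have hcy : ¬ c.Adj x y := fun hcy => by
    have hcz := Subgraph.mem_edgeSet.mp (hsub ⟨hc, Subgraph.mem_edgeSet.mpr hcy⟩).2
    have : G.neighborSet x ⊆ c.neighborSet x := fun t ht => by
      rcases hN t ht with rfl | rfl | rfl <;> assumption
    have := Set.ncard_le_ncard this hcfin
    omega
  have hcz : c.Adj x z := by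
    by_contra hcz
    have : c.neighborSet x ⊆ {w} := fun t ht => by
      rcases hN t (hcN ht) with rfl | rfl | rfl
      exacts [absurd ht hcy, absurd ht hcz, rfl]
    have := Set.ncard_le_ncard this
    simp only [Set.ncard_singleton] at this
    omega
  have hlt : cyclesThrough G g s(x, y) ⊂ cyclesThrough G g s(x, z) :=
    (Set.ssubset_iff_of_subset hsub).mpr
      ⟨c, ⟨hc, Subgraph.mem_edgeSet.mpr hcz⟩, fun h => hcy (Subgraph.mem_edgeSet.mp h.2)⟩
  have := Set.ncard_lt_ncard hlt
    (Set.finite_of_ncard_ne_zero ((hcnt _ hz).trans_ne hlam.ne'))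
  rw [hcnt _ hy, hcnt _ hz] at this
  exact lt_irrefl _ this

lemma exists_isCycle_mem_edges_avoiding {lam : ℕ} (hdeg : ∀ x : V, (G.neighborSet x).ncard = 3)
    (hcnt : ∀ e ∈ G.edgeSet, (cyclesThrough G G.girth e).ncard = lam) (hlam : 0 < lam)
    {d : Sym2 V} (hd : d ∈ G.edgeSet) (e : Sym2 V) :
    ∃ (x : V) (W : G.Walk x x), W.IsCycle ∧ d ∈ W.edges ∧ (e ∈ W.edges → e = d) := by
  have hne : (cyclesThrough G G.girth d).Nonempty :=
    Set.nonempty_of_ncard_ne_zero ((hcnt d hd).trans_ne hlam.ne')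
  obtain ⟨c, ⟨⟨x, W, hW, -, rfl⟩, hdc⟩, hec⟩ :
      ∃ c ∈ cyclesThrough G G.girth d, e ∈ c.edgeSet → e = d := by
    by_cases hed : e = d
    · obtain ⟨c, hc⟩ := hne
      exact ⟨c, hc, fun _ => hed⟩
    by_contra! h
    induction d using Sym2.ind with | _ u y => ?_
    obtain ⟨x, y', z, heq, hz, hzy, hsub⟩ :=
      exists_adj_cyclesThrough_subset (Ne.symm hed) hne fun c hc => ⟨hc.1, (h c hc).1⟩
    rw [heq] at hd
    exact not_cyclesThrough_subset (hdeg x) hd hz hzy.symm hcnt hlam hsub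
  exact ⟨x, W, hW, by simpa using hdc, by simpa using hec⟩

end SimpleGraph

theorem stmt_9_general {V : Type*} (G : SimpleGraph V) (v g lam : ℕ)
    (hG : IsEGR G v 3 g lam) (hconn : G.Connected)
    (hlam : lam > 2 ^ ((g - 4) / 2)) :
    ∀ s : Finset (Sym2 V), s.card ≤ 2 → (G.deleteEdges ↑s).Connected := by
  obtain ⟨-, hdeg, rfl, hcnt⟩ := hG
  have h3 : G.IsEdgeConnected 3 :=
    isEdgeConnected_three_of_forall_exists_isCycle hconn.preconnected fun d hd =>
      exists_isCycle_mem_edges_avoiding hdeg hcnt (Nat.zero_lt_of_lt hlam) hd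
  intro s hs
  have := hconn.nonempty
  exact ⟨fun u w => h3 u w <| by
    rw [Set.encard_coe_eq_coe_finsetCard]; exact_mod_cast Nat.lt_succ_of_le hs⟩

/-- A connected egr(v,3,g,λ)-graph with g ≥ 5 and λ > 2^⌈(g−5)/2⌉ is 3-edge-connected. -/
theorem stmt_9 {V : Type*} (G : SimpleGraph V) (v g lam : ℕ)
    (hG : IsEGR G v 3 g lam) (hg : 5 ≤ g) (hconn : G.Connected)
    (hlam : lam > 2 ^ ((g - 4) / 2)) :
    ∀ s : Finset (Sym2 V), s.card ≤ 2 → (G.deleteEdges ↑s).Connected :=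
  stmt_9_general G v g lam hG hconn hlam
end

section
/- There is no egr(v,4,4,4)-graph, i.e., there is no 4-regular graph of girth 4 in which every edge lies on exactly 4 cycles of length 4. -/
open SimpleGraph

/-!
Write `c(x, y)` for the number of common neighbours of `x` and `y`. Counting the 4-cycles through
the edges at a vertex `a` shows that the six numbers `c(x, y)`, `x ≠ y ∈ N(a)`, are the weights of
a `K₄` all of whose weighted degrees are `7`; hence opposite edges of this `K₄` carry equal
weights. This rules out twins (distinct vertices with the same neighbourhood), so `c(x, y) ≤ 3`
for `x ≠ y`, and then every neighbour `n` of `x` has a neighbour `z ≠ x` with `c(x, z) = 3`.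
For two distinct such `z₁, z₂` the 3-sets `N(x) ∩ N(zᵢ)` meet in at least two vertices, so
`c(z₁, z₂) ≥ 2`; but at one of these, `a` with `N(a) = {x, z₁, z₂, t}`, the `K₄` gives
`c(z₁, z₂) = c(x, t) = 7 - 3 - 3 = 1`. So `z` is unique, hence adjacent to all of `N(x)`, which
contradicts `c(x, z) = 3`.
-/

open Finset

namespace Finset

theorem exists_eq_insert_insert_insert {α : Type*} [DecidableEq α] {s : Finset α}
    {x y z : α} (hs : #s = 4) (hx : x ∈ s) (hy : y ∈ s) (hz : z ∈ s) (hxy : x ≠ y)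
    (hxz : x ≠ z) (hyz : y ≠ z) : ∃ t, s = {x, y, z, t} ∧ [x, y, z, t].Nodup := by
  have hy' : y ∈ s.erase x := mem_erase.mpr ⟨hxy.symm, hy⟩
  have hz' : z ∈ (s.erase x).erase y := mem_erase.mpr ⟨hyz.symm, mem_erase.mpr ⟨hxz.symm, hz⟩⟩
  obtain ⟨t, ht⟩ := card_eq_one.mp (by
    rw [card_erase_of_mem hz', card_erase_of_mem hy', card_erase_of_mem hx, hs] :
    #(((s.erase x).erase y).erase z) = 1)
  have htm : t ∈ ((s.erase x).erase y).erase z := ht ▸ mem_singleton_self t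
  simp only [mem_erase] at htm
  obtain ⟨htz, hty, htx, hts⟩ := htm
  have hd : [x, y, z, t].Nodup := by simp [*, Ne.symm htz, Ne.symm hty, Ne.symm htx]
  refine ⟨t, (eq_of_subset_of_card_le ?_ ?_).symm, hd⟩
  · simp [insert_subset_iff, *]
  · rw [hs, card_insert_of_notMem, card_insert_of_notMem, card_pair htz.symm] <;>
      simp [*, Ne.symm hty, Ne.symm htx]

end Finset

namespace SimpleGraph
variable {V : Type*} {G : SimpleGraph V}

theorem Walk.isCycle_quad {u v x y : V} (h₁ : G.Adj u v) (h₂ : G.Adj v y) (h₃ : G.Adj y x)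
    (h₄ : G.Adj x u) (hyu : y ≠ u) (hxv : x ≠ v) :
    (cons h₁ (cons h₂ (cons h₃ (cons h₄ nil)))).IsCycle := by
  simp [Walk.cons_isCycle_iff, h₁.ne, h₂.ne, h₃.ne, h₄.ne, h₁.ne.symm, h₄.ne.symm, hyu, hyu.symm,
    hxv.symm]

theorem Walk.exists_toSubgraph_eq_quad {u v : V} (huv : G.Adj u v) (w : G.Walk u u) (hw : w.IsCycle)
    (hl : w.length = 4) (he : s(u, v) ∈ w.edges) :
    ∃ x y, ∃ (h₂ : G.Adj v y) (h₃ : G.Adj y x) (h₄ : G.Adj x u), y ≠ u ∧ x ≠ v ∧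
      w.toSubgraph = (cons huv (cons h₂ (cons h₃ (cons h₄ nil)))).toSubgraph := by
  rcases w with _ | @⟨_, b, _, h₁, _ | @⟨_, c, _, h₂, _ | @⟨_, d, _, h₃, _ | ⟨h₄, _ | ⟨_, _⟩⟩⟩⟩⟩ <;>
    simp at hl
  have hd := hw.support_nodup
  simp only [support_cons, support_nil, List.tail_cons, List.nodup_cons, List.mem_cons,
    List.not_mem_nil, or_false, not_or] at hd
  obtain ⟨⟨hbc, hbd, hbu⟩, ⟨hcd, hcu⟩, hdu, -⟩ := hd
  obtain rfl | rfl : v = b ∨ v = d := by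
    simp only [edges_cons, edges_nil, List.mem_cons, List.not_mem_nil, or_false, Sym2.eq_iff] at he
    grind
  · exact ⟨d, c, h₂, h₃, h₄, hcu, hbd ∘ Eq.symm, rfl⟩
  · exact ⟨b, c, h₃.symm, h₂.symm, h₁.symm, hcu, hbd, (toSubgraph_reverse _).symm⟩

theorem Walk.eq_of_toSubgraph_quad_eq {u v x y x' y' : V} (h₁ : G.Adj u v) (h₂ : G.Adj v y)
    (h₃ : G.Adj y x) (h₄ : G.Adj x u) (h₂' : G.Adj v y') (h₃' : G.Adj y' x') (h₄' : G.Adj x' u)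
    (hyu : y ≠ u) (hxv : x ≠ v) (hy'u : y' ≠ u) (hx'v : x' ≠ v)
    (h : (cons h₁ (cons h₂ (cons h₃ (cons h₄ nil)))).toSubgraph =
      (cons h₁ (cons h₂' (cons h₃' (cons h₄' nil)))).toSubgraph) :
    x = x' ∧ y = y' := by
  have hvy : s(v, y) ∈ (cons h₁ (cons h₂' (cons h₃' (cons h₄' nil)))).edges := by
    rw [← mem_edges_toSubgraph, ← h, mem_edges_toSubgraph]; simp
  have hxu : s(x, u) ∈ (cons h₁ (cons h₂' (cons h₃' (cons h₄' nil)))).edges := by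
    rw [← mem_edges_toSubgraph, ← h, mem_edges_toSubgraph]; simp
  simp only [edges_cons, edges_nil, List.mem_cons, List.not_mem_nil, or_false, Sym2.eq_iff]
    at hvy hxu
  have := h₁.ne; have := h₂.ne; have := h₄.ne; have := h₂'.ne; have := h₄'.ne
  grind

theorem ncard_setOf_isCycleSub_four_eq_sum [G.LocallyFinite] [DecidableEq V] {u v : V}
    (huv : G.Adj u v) :
    {c : G.Subgraph | IsCycleSub G 4 c ∧ s(u, v) ∈ c.edgeSet}.ncard =
      ∑ x ∈ (G.neighborFinset u).erase v, #((G.neighborFinset x ∩ G.neighborFinset v).erase u) := by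
  rw [← card_sigma, ← Set.ncard_coe_finset]
  have hmem : ∀ p ∈ (((G.neighborFinset u).erase v).sigma fun x =>
      (G.neighborFinset x ∩ G.neighborFinset v).erase u : Set (Σ _ : V, V)),
      G.Adj v p.2 ∧ G.Adj p.2 p.1 ∧ G.Adj p.1 u ∧ p.2 ≠ u ∧ p.1 ≠ v := by
    simp only [coe_sigma, Set.mem_sigma_iff, mem_coe, mem_erase, mem_inter, mem_neighborFinset]
    grind [G.adj_symm]
  symm
  refine Set.ncard_congr (fun p hp => (Walk.cons huv (.cons (hmem p hp).1 (.cons (hmem p hp).2.1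
    (.cons (hmem p hp).2.2.1 .nil)))).toSubgraph) ?_ ?_ ?_
  · intro p hp
    obtain ⟨h₂, h₃, h₄, hyu, hxv⟩ := hmem p hp
    exact ⟨⟨u, _, Walk.isCycle_quad huv h₂ h₃ h₄ hyu hxv, rfl, rfl⟩,
      (Walk.mem_edges_toSubgraph _).mpr (by simp)⟩
  · rintro ⟨x, y⟩ ⟨x', y'⟩ hp hp' h
    obtain ⟨h₂, h₃, h₄, hyu, hxv⟩ := hmem _ hp
    obtain ⟨h₂', h₃', h₄', hy'u, hx'v⟩ := hmem _ hp'
    obtain ⟨rfl, rfl⟩ := Walk.eq_of_toSubgraph_quad_eq huv h₂ h₃ h₄ h₂' h₃' h₄' hyu hxv hy'u hx'v h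
    rfl
  · rintro c ⟨⟨a, w, hw, hl, rfl⟩, he⟩
    rw [Walk.mem_edges_toSubgraph] at he
    have hu : u ∈ w.support := w.fst_mem_support_of_mem_edges he
    obtain ⟨x, y, h₂, h₃, h₄, hyu, hxv, hq⟩ := Walk.exists_toSubgraph_eq_quad huv (w.rotate u hu)
      (hw.rotate hu) (by rw [Walk.length_rotate, hl]) ((w.rotate_edges u hu).mem_iff.mpr he)
    refine ⟨⟨x, y⟩, ?_, by rw [← Walk.toSubgraph_rotate w hu, hq]⟩
    simp only [coe_sigma, Set.mem_sigma_iff, mem_coe, mem_erase, mem_inter, mem_neighborFinset]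
    exact ⟨⟨hxv, h₄.symm⟩, hyu, h₃.symm, h₂⟩

theorem degree_eq_ncard_neighborSet [G.LocallyFinite] (x : V) :
    G.degree x = (G.neighborSet x).ncard := by
  rw [Set.ncard_eq_toFinset_card', ← card_neighborFinset_eq_degree, neighborFinset]

variable [DecidableEq V]

variable (G) in
def codegree [G.LocallyFinite] (x y : V) : ℕ := #(G.neighborFinset x ∩ G.neighborFinset y)

section codegree

variable [G.LocallyFinite]

theorem codegree_comm (x y : V) : G.codegree x y = G.codegree y x := by
  rw [codegree, codegree, inter_comm]

@[simp]
theorem codegree_self (x : V) : G.codegree x x = G.degree x := by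
  rw [codegree, inter_self, card_neighborFinset_eq_degree]

theorem codegree_le_degree (x y : V) : G.codegree x y ≤ G.degree x :=
  card_le_card inter_subset_left

end codegree

/-- `7 = 4 + 3`: the four 4-cycles `u v y x` through the edge `uv`, plus the common neighbour `u`
of `v` and each of the three `x`. -/
structure FourRegularFourQuads (G : SimpleGraph V) [G.LocallyFinite] : Prop where
  isRegularOfDegree : G.IsRegularOfDegree 4
  sum_codegree_erase : ∀ ⦃u v⦄, G.Adj u v → ∑ x ∈ (G.neighborFinset u).erase v, G.codegree x v = 7

namespace FourRegularFourQuads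

variable [G.LocallyFinite]

theorem card_neighborFinset (h : G.FourRegularFourQuads) (x : V) : #(G.neighborFinset x) = 4 :=
  h.isRegularOfDegree x

theorem neighborFinset_eq_of_codegree_eq_four (h : G.FourRegularFourQuads) {x y : V}
    (hxy : G.codegree x y = 4) : G.neighborFinset x = G.neighborFinset y := by
  have hx : G.neighborFinset x ∩ G.neighborFinset y = G.neighborFinset x :=
    eq_of_subset_of_card_le inter_subset_left (by rw [h.card_neighborFinset, ← hxy, codegree])
  have hy : G.neighborFinset x ∩ G.neighborFinset y = G.neighborFinset y :=
    eq_of_subset_of_card_le inter_subset_right (by rw [h.card_neighborFinset, ← hxy, codegree])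
  exact hx.symm.trans hy

theorem sum_codegree (h : G.FourRegularFourQuads) {a x : V} (hx : x ∈ G.neighborFinset a) :
    ∑ w ∈ G.neighborFinset a, G.codegree w x = 11 := by
  rw [← add_sum_erase _ _ hx, h.sum_codegree_erase (G.mem_neighborFinset _ _ |>.mp hx),
    codegree_self, h.isRegularOfDegree x]

theorem codegree_add_codegree_add_codegree_add_codegree (h : G.FourRegularFourQuads)
    {a x y z t w : V} (ha : G.neighborFinset a = {x, y, z, t}) (hd : [x, y, z, t].Nodup)
    (hw : w ∈ G.neighborFinset a) :
    G.codegree x w + G.codegree y w + G.codegree z w + G.codegree t w = 11 := by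
  have := h.sum_codegree hw
  simp only [List.nodup_cons, List.mem_cons, List.not_mem_nil, or_false, not_or] at hd
  rwa [ha, sum_insert (by simp [hd.1.1, hd.1.2.1, hd.1.2.2]),
    sum_insert (by simp [hd.2.1.1, hd.2.1.2]), sum_pair hd.2.2.1, ← add_assoc,
    ← add_assoc] at this

theorem codegree_eq_codegree (h : G.FourRegularFourQuads) {a x y z t : V}
    (ha : G.neighborFinset a = {x, y, z, t}) (hd : [x, y, z, t].Nodup) :
    G.codegree x y = G.codegree z t := by
  have hmem : ∀ w ∈ ({x, y, z, t} : Finset V), w ∈ G.neighborFinset a := fun w hw => ha ▸ hw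
  have hx := h.codegree_add_codegree_add_codegree_add_codegree ha hd (hmem x (by simp))
  have hy := h.codegree_add_codegree_add_codegree_add_codegree ha hd (hmem y (by simp))
  have hz := h.codegree_add_codegree_add_codegree_add_codegree ha hd (hmem z (by simp))
  have ht := h.codegree_add_codegree_add_codegree_add_codegree ha hd (hmem t (by simp))
  simp only [codegree_self, h.isRegularOfDegree _] at hx hy hz ht
  rw [codegree_comm y x, codegree_comm z x, codegree_comm t x, codegree_comm z y,
    codegree_comm t y, codegree_comm t z] at *
  omega

theorem codegree_le_three (h : G.FourRegularFourQuads) {u v : V} (huv : u ≠ v) :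
    G.codegree u v ≤ 3 := by
  by_contra! h4
  have huv' : G.codegree u v = 4 :=
    le_antisymm ((codegree_le_degree u v).trans_eq (h.isRegularOfDegree u)) h4
  obtain ⟨a, ha⟩ : (G.neighborFinset u).Nonempty := card_pos.mp (by simp [h.card_neighborFinset])
  have hua : u ∈ G.neighborFinset a := by simpa [G.adj_comm] using ha
  have hva : v ∈ G.neighborFinset a := by
    rw [h.neighborFinset_eq_of_codegree_eq_four huv'] at ha; simpa [G.adj_comm] using ha
  obtain ⟨p, hpa, hp⟩ := exists_mem_notMem_of_card_lt_card (s := {u, v}) (t := G.neighborFinset a)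
    (by rw [h.card_neighborFinset]; exact (card_le_two).trans_lt (by norm_num))
  simp only [mem_insert, mem_singleton, not_or] at hp
  obtain ⟨q, hNa, hd⟩ := exists_eq_insert_insert_insert (h.card_neighborFinset a) hua hva hpa huv
    (Ne.symm hp.1) (Ne.symm hp.2)
  -- `p` and `q` are twins as well, so they contribute equally to the weighted degree of `u`.
  have hpq := h.neighborFinset_eq_of_codegree_eq_four (h.codegree_eq_codegree hNa hd ▸ huv')
  have hu := h.codegree_add_codegree_add_codegree_add_codegree hNa hd hua
  rw [codegree_self, h.isRegularOfDegree, codegree_comm, huv', codegree, codegree, hpq] at hu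
  omega

theorem exists_codegree_eq_three (h : G.FourRegularFourQuads) {n x : V}
    (hnx : G.Adj n x) : ∃ z ∈ (G.neighborFinset n).erase x, G.codegree z x = 3 := by
  by_contra! hne
  have hle : ∀ z ∈ (G.neighborFinset n).erase x, G.codegree z x ≤ 2 := fun z hz => by
    have := h.codegree_le_three (ne_of_mem_erase hz)
    have := hne z hz
    omega
  have := sum_le_card_nsmul _ _ _ hle
  rw [h.sum_codegree_erase hnx, card_erase_of_mem ((G.mem_neighborFinset _ _).mpr hnx),
    h.card_neighborFinset] at this
  norm_num at this

theorem eq_of_codegree_eq_three (h : G.FourRegularFourQuads) {x z₁ z₂ : V}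
    (h₁ : G.codegree z₁ x = 3) (h₂ : G.codegree z₂ x = 3) (hz₁ : z₁ ≠ x) (hz₂ : z₂ ≠ x) :
    z₁ = z₂ := by
  by_contra hz
  set S₁ := G.neighborFinset x ∩ G.neighborFinset z₁
  set S₂ := G.neighborFinset x ∩ G.neighborFinset z₂
  have hS : 2 ≤ #(S₁ ∩ S₂) := by
    have hunion : #(S₁ ∪ S₂) ≤ 4 :=
      h.card_neighborFinset x ▸ card_le_card (union_subset inter_subset_left inter_subset_left)
    have := card_union_add_card_inter S₁ S₂
    rw [codegree_comm] at h₁ h₂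
    change #S₁ = 3 at h₁
    change #S₂ = 3 at h₂
    omega
  have hz₁₂ : 2 ≤ G.codegree z₁ z₂ :=
    hS.trans (card_le_card fun w hw => by simp_all [S₁, S₂])
  obtain ⟨a, ha⟩ := card_pos.mp (hS.trans_lt' two_pos)
  simp only [S₁, S₂, mem_inter, mem_neighborFinset] at ha
  have hxa : x ∈ G.neighborFinset a := (G.mem_neighborFinset _ _).mpr ha.1.1.symm
  obtain ⟨t, hNa, hd⟩ := exists_eq_insert_insert_insert (h.card_neighborFinset a)
    ((G.mem_neighborFinset _ _).mpr ha.1.2.symm) ((G.mem_neighborFinset _ _).mpr ha.2.2.symm)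
    hxa hz hz₁ hz₂
  have hx := h.codegree_add_codegree_add_codegree_add_codegree hNa hd hxa
  rw [h₁, h₂, codegree_self, h.isRegularOfDegree] at hx
  have := h.codegree_eq_codegree hNa hd
  rw [codegree_comm x t] at this
  omega

theorem isEmpty (h : G.FourRegularFourQuads) : IsEmpty V := by
  refine ⟨fun x => ?_⟩
  obtain ⟨n, hn⟩ : (G.neighborFinset x).Nonempty := card_pos.mp (by simp [h.card_neighborFinset])
  obtain ⟨z, hz, hzx⟩ := h.exists_codegree_eq_three ((G.mem_neighborFinset _ _).mp hn).symm
  have hsub : G.neighborFinset x ⊆ G.neighborFinset z := by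
    intro m hm
    obtain ⟨z', hz', hz'x⟩ := h.exists_codegree_eq_three ((G.mem_neighborFinset _ _).mp hm).symm
    obtain rfl := h.eq_of_codegree_eq_three hz'x hzx (ne_of_mem_erase hz') (ne_of_mem_erase hz)
    simpa [G.adj_comm] using mem_of_mem_erase hz'
  have : G.codegree z x = 4 := by
    rw [codegree_comm, codegree, inter_eq_left.mpr hsub, h.card_neighborFinset]
  omega

end FourRegularFourQuads

theorem _root_.IsEGR.fourRegularFourQuads [G.LocallyFinite] {n : ℕ} (hG : IsEGR G n 4 4 4) :
    G.FourRegularFourQuads where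
  isRegularOfDegree x := (degree_eq_ncard_neighborSet x).trans (hG.2.1 x)
  sum_codegree_erase u v huv := by
    have hcycles := hG.2.2.2 s(u, v) huv
    rw [ncard_setOf_isCycleSub_four_eq_sum huv] at hcycles
    calc ∑ x ∈ (G.neighborFinset u).erase v, G.codegree x v
        = ∑ x ∈ (G.neighborFinset u).erase v,
            (#((G.neighborFinset x ∩ G.neighborFinset v).erase u) + 1) := by
          refine sum_congr rfl fun x hx => (card_erase_add_one ?_).symm
          simp only [mem_erase, mem_neighborFinset] at hx
          simp [hx.2.symm, huv.symm]
      _ = 7 := by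
        rw [sum_add_distrib, hcycles, sum_const, card_erase_of_mem (by simpa using huv),
          card_neighborFinset_eq_degree, degree_eq_ncard_neighborSet, hG.2.1]
        rfl

end SimpleGraph

/-- There is no egr(v,4,4,4)-graph. -/
theorem stmt_10 : ¬ ∃ (V : Type) (G : SimpleGraph V) (v : ℕ), IsEGR G v 4 4 4 := by
  rintro ⟨V, G, v, hG⟩
  classical
  have : G.LocallyFinite := fun x => (Set.finite_of_ncard_pos (by rw [hG.2.1 x]; norm_num)).fintype
  obtain ⟨a, -⟩ := (exists_girth_eq_length (G := G)).mpr fun hA => by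
    simpa [hG.2.2.1] using hA.girth_eq_zero
  exact hG.fourRegularFourQuads.isEmpty.false a
end

section
/- There is no egr(v,4,5,8)-graph, i.e., there is no 4-regular graph of girth 5 in which every edge lies on exactly 8 cycles of length 5. -/
/-
In a 4-regular graph of girth 5, the 5-cycles through an edge `u x` correspond to the edges
between the branch `N(x) \ {u}` and the branches `N(s) \ {u}` of the other neighbours `s` of `u`;
girth 5 allows at most one such edge at each vertex. With three vertices per branch, eight
5-cycles per edge force, for every `x`, the pattern `3 + 3 + 2`: exactly one edge leaves the ball
of radius 2 around `u` from the branch of `x`. Counting the 5-cycles through the edge from `x` to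
the start of that exit shows that all four exits end at one vertex `z`. So the ball together with
`z` is a union of components with `1 + 4 + 12 + 1 = 18` vertices, and double counting the pairs
(dart, 5-cycle) there gives `4 * 18 * 8 = 2 * 5 * N`, which is impossible.
-/

open SimpleGraph

open Finset
open scoped Classical

lemma Finset.exists_not_and_forall_of_card_filter_add_one {α : Type*} {s : Finset α}
    {P : α → Prop} [DecidablePred P] (h : #(s.filter P) + 1 = #s) :
    ∃ w ∈ s, ¬ P w ∧ ∀ t ∈ s, t ≠ w → P t := by
  obtain ⟨w, hw⟩ := card_eq_one.mp <| show #(s.filter (¬ P ·)) = 1 by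
    have := card_filter_add_card_filter_not (s := s) P
    omega
  have hw' := mem_filter.mp (hw ▸ mem_singleton_self w)
  exact ⟨w, hw'.1, hw'.2, fun t ht htw => by_contra fun hPt =>
    htw (mem_singleton.mp (hw ▸ mem_filter.mpr ⟨ht, hPt⟩))⟩

lemma Finset.card_filter_mk_mem_eq_two_mul {α : Type*} {S : Finset α} {E : Finset (Sym2 α)}
    (hE : ∀ e ∈ E, ¬ e.IsDiag ∧ ∀ v ∈ e, v ∈ S) :
    #{p ∈ S ×ˢ S | s(p.1, p.2) ∈ E} = 2 * #E := by
  rw [card_eq_sum_card_fiberwise (f := fun p => s(p.1, p.2)) (t := E)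
    (s := {p ∈ S ×ˢ S | s(p.1, p.2) ∈ E}) fun p hp => (mem_filter.mp hp).2,
    mul_comm, ← smul_eq_mul, ← sum_const]
  refine sum_congr rfl fun e he => ?_
  induction e using Sym2.ind with
  | h a b =>
    obtain ⟨hab, hS⟩ := hE _ he
    have hab : a ≠ b := by simpa using hab
    have ha := hS a (Sym2.mem_mk_left a b)
    have hb := hS b (Sym2.mem_mk_right a b)
    have hfiber : {p ∈ {p ∈ S ×ˢ S | s(p.1, p.2) ∈ E} | s(p.1, p.2) = s(a, b)} =
        {(a, b), (b, a)} := by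
      ext ⟨x, y⟩
      simp only [mem_filter, mem_product, mem_insert, mem_singleton, Prod.mk.injEq, Sym2.eq_iff]
      constructor
      · exact fun h => h.2
      · rintro (⟨rfl, rfl⟩ | ⟨rfl, rfl⟩)
        · exact ⟨⟨⟨ha, hb⟩, he⟩, Or.inl ⟨rfl, rfl⟩⟩
        · exact ⟨⟨⟨hb, ha⟩, by rwa [Sym2.eq_swap]⟩, Or.inr ⟨rfl, rfl⟩⟩
    rw [hfiber, card_pair (by simp [hab])]

namespace SimpleGraph

variable {V : Type*} {G : SimpleGraph V}

section Girth

lemma five_le_length_of_isCycle (hg : 5 ≤ G.egirth) {a : V} {w : G.Walk a a}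
    (hw : w.IsCycle) : 5 ≤ w.length := by
  exact_mod_cast hg.trans (egirth_le_length hw)

lemma not_adj_of_adj_of_adj (hg : 5 ≤ G.egirth) {x y z : V} (hxy : G.Adj x y)
    (hyz : G.Adj y z) : ¬ G.Adj z x := by
  intro hzx
  have hc : (Walk.cons hxy (.cons hyz (.cons hzx .nil))).IsCycle := by
    simp [Walk.cons_isCycle_iff, hxy.ne, hyz.ne, hzx.ne, hxy.ne', hzx.ne']
  simpa using five_le_length_of_isCycle hg hc

lemma eq_of_adj_of_adj (hg : 5 ≤ G.egirth) {x y w w' : V} (hxy : x ≠ y) (hwx : G.Adj w x)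
    (hwy : G.Adj w y) (hw'x : G.Adj w' x) (hw'y : G.Adj w' y) : w = w' := by
  by_contra hne
  have hc : (Walk.cons hwx (.cons hw'x.symm (.cons hw'y (.cons hwy.symm .nil)))).IsCycle := by
    simp [Walk.cons_isCycle_iff, hwx.ne, hw'y.ne, hwy.ne, hwx.ne', hw'x.ne', hwy.ne',
      hxy, hne, Ne.symm hne]
  simpa using five_le_length_of_isCycle hg hc

end Girth

section Pentagon

variable {u x w y v : V}

def pentagon (hux : G.Adj u x) (hxw : G.Adj x w) (hwy : G.Adj w y) (hyv : G.Adj y v)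
    (hvu : G.Adj v u) : G.Walk u u :=
  .cons hux (.cons hxw (.cons hwy (.cons hyv (.cons hvu .nil))))

lemma pentagon_reverse (hux : G.Adj u x) (hxw : G.Adj x w) (hwy : G.Adj w y) (hyv : G.Adj y v)
    (hvu : G.Adj v u) :
    (pentagon hux hxw hwy hyv hvu).reverse =
      pentagon hvu.symm hyv.symm hwy.symm hxw.symm hux.symm :=
  rfl

lemma pentagon_distinct (hg : 5 ≤ G.egirth) (hux : G.Adj u x) (hxw : G.Adj x w)
    (hwy : G.Adj w y) (hyv : G.Adj y v) (hvu : G.Adj v u) :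
    x ≠ y ∧ x ≠ v ∧ w ≠ u ∧ w ≠ v ∧ y ≠ u := by
  refine ⟨?_, ?_, ?_, ?_, ?_⟩ <;> rintro rfl
  exacts [not_adj_of_adj_of_adj hg hux hyv hvu, not_adj_of_adj_of_adj hg hxw hwy hyv,
    not_adj_of_adj_of_adj hg hwy hyv hvu, not_adj_of_adj_of_adj hg hux hxw hvu,
    not_adj_of_adj_of_adj hg hux hxw hwy]

variable {hux : G.Adj u x} {hxw : G.Adj x w} {hwy : G.Adj w y} {hyv : G.Adj y v}
  {hvu : G.Adj v u}

lemma pentagon_isCycle (hg : 5 ≤ G.egirth) : (pentagon hux hxw hwy hyv hvu).IsCycle := by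
  obtain ⟨hxy, hxv, hwu, hwv, hyu⟩ := pentagon_distinct hg hux hxw hwy hyv hvu
  simp [pentagon, Walk.cons_isCycle_iff, hux.ne, hxw.ne, hwy.ne, hyv.ne, hvu.ne, hux.ne',
    hvu.ne', hxy, hxv, hwu, hwv, hyu, hwu.symm, hyu.symm]

lemma mem_pentagon_edges {e : Sym2 V} : e ∈ (pentagon hux hxw hwy hyv hvu).edges ↔
    e = s(u, x) ∨ e = s(x, w) ∨ e = s(w, y) ∨ e = s(y, v) ∨ e = s(v, u) := by
  simp [pentagon]

lemma pentagon_toSubgraph_adj_iff (hg : 5 ≤ G.egirth) {t : V} :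
    ((pentagon hux hxw hwy hyv hvu).toSubgraph.Adj u t ↔ t = x ∨ t = v) ∧
      ((pentagon hux hxw hwy hyv hvu).toSubgraph.Adj v t ↔ t = y ∨ t = u) := by
  obtain ⟨hxy, hxv, hwu, hwv, hyu⟩ := pentagon_distinct hg hux hxw hwy hyv hvu
  simp only [← Subgraph.mem_edgeSet, Walk.mem_edges_toSubgraph, mem_pentagon_edges, Sym2.eq_iff]
  grind [hux.ne, hvu.ne, hyv.ne]

end Pentagon

lemma pentagon_toSubgraph_congr {u x w w' y v : V} {hux : G.Adj u x} {hxw : G.Adj x w}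
    {hwy : G.Adj w y} {hxw' : G.Adj x w'} {hw'y : G.Adj w' y} {hyv : G.Adj y v}
    {hvu : G.Adj v u} (h : w = w') :
    (pentagon hux hxw hwy hyv hvu).toSubgraph =
      (pentagon hux hxw' hw'y hyv hvu).toSubgraph := by
  subst h; rfl

lemma Walk.exists_eq_pentagon {a : V} (c : G.Walk a a) (hc : c.length = 5) :
    ∃ (x w y v : V) (hax : G.Adj a x) (hxw : G.Adj x w) (hwy : G.Adj w y) (hyv : G.Adj y v)
      (hva : G.Adj v a), c = pentagon hax hxw hwy hyv hva := by
  match c, hc with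
  | .cons _ (.cons _ (.cons _ (.cons _ (.cons _ .nil)))), _ =>
    exact ⟨_, _, _, _, _, _, _, _, _, rfl⟩

lemma IsCycleSub.exists_eq_pentagon (hg : 5 ≤ G.egirth) {c : G.Subgraph}
    (hc : IsCycleSub G 5 c) {u v : V} (huv : s(u, v) ∈ c.edgeSet) :
    ∃ (x w y : V) (hux : G.Adj u x) (hxw : G.Adj x w) (hwy : G.Adj w y) (hyv : G.Adj y v)
      (hvu : G.Adj v u), c = (pentagon hux hxw hwy hyv hvu).toSubgraph := by
  obtain ⟨a, c, hcyc, hlen, rfl⟩ := hc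
  rw [Walk.mem_edges_toSubgraph] at huv
  have hu : u ∈ c.support := c.fst_mem_support_of_mem_edges huv
  obtain ⟨x, w, y, v', hux, hxw, hwy, hyv', hv'u, hrot⟩ :=
    Walk.exists_eq_pentagon (c.rotate u hu) (by rw [Walk.length_rotate, hlen])
  rw [← c.toSubgraph_rotate hu, hrot]
  have huv' : s(u, v) ∈ (pentagon hux hxw hwy hyv' hv'u).edges := by
    rw [← hrot]; exact (c.rotate_edges u hu).mem_iff.mpr huv
  obtain ⟨hxy, hxv', hwu, hwv', hyu⟩ := pentagon_distinct hg hux hxw hwy hyv' hv'u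
  rw [mem_pentagon_edges] at huv'
  have hv : v = v' ∨ v = x := by
    simp only [Sym2.eq_iff] at huv'
    grind [hux.ne, hv'u.ne]
  rcases hv with rfl | rfl
  · exact ⟨x, w, y, hux, hxw, hwy, hyv', hv'u, rfl⟩
  · refine ⟨v', y, w, hv'u.symm, hyv'.symm, hwy.symm, hxw.symm, hux.symm, ?_⟩
    rw [← Walk.toSubgraph_reverse, pentagon_reverse]

lemma Walk.mem_of_mem_support {S : Set V} (hS : ∀ a ∈ S, ∀ b, G.Adj a b → b ∈ S) {a b : V}
    (w : G.Walk a b) (ha : a ∈ S) {v : V} (hv : v ∈ w.support) : v ∈ S := by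
  induction w with
  | nil => simp_all
  | cons h w ih =>
    rw [Walk.support_cons, List.mem_cons] at hv
    exact hv.elim (· ▸ ha) (ih (hS _ ha _ h))

lemma card_filter_mem_edges_of_isCycle {S : Finset V} (hS : ∀ a ∈ S, ∀ b, G.Adj a b → b ∈ S)
    {a : V} (ha : a ∈ S) {w : G.Walk a a} (hw : w.IsCycle) :
    #{p ∈ S ×ˢ S | G.Adj p.1 p.2 ∧ s(p.1, p.2) ∈ w.edges} = 2 * w.length := by
  rw [← w.length_edges, ← List.toFinset_card_of_nodup hw.edges_nodup,
    ← card_filter_mk_mem_eq_two_mul]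
  · congr 1
    refine filter_congr fun p _ => ?_
    rw [List.mem_toFinset]
    exact ⟨And.right, fun h => ⟨w.adj_of_mem_edges h, h⟩⟩
  · intro e he
    rw [List.mem_toFinset] at he
    exact ⟨G.not_isDiag_of_mem_edgeSet (w.edges_subset_edgeSet he),
      fun v hv => w.mem_of_mem_support hS ha (Walk.mem_support_of_mem_edges he hv)⟩

variable [G.LocallyFinite]

lemma card_filter_adj_of_closed {k : ℕ} {S : Finset V} (hS : ∀ a ∈ S, ∀ b, G.Adj a b → b ∈ S)
    (hdeg : ∀ a ∈ S, G.degree a = k) : #{p ∈ S ×ˢ S | G.Adj p.1 p.2} = k * #S := by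
  rw [card_filter, sum_product, mul_comm, ← smul_eq_mul, ← sum_const]
  refine sum_congr rfl fun a ha => ?_
  rw [← card_filter, ← hdeg a ha, ← card_neighborFinset_eq_degree]
  congr 1
  ext b
  simpa using fun h => hS a ha b h

/-- Double counting the pairs (dart in `S`, `g`-cycle through it): every dart lies on `l` cycles,
and a `g`-cycle meeting the closed set `S` carries `2 * g` darts, all in `S`. -/
theorem two_mul_dvd_of_closed {k g l : ℕ} (hl : 0 < l) {S : Finset V}
    (hS : ∀ a ∈ S, ∀ b, G.Adj a b → b ∈ S) (hdeg : ∀ a ∈ S, G.degree a = k)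
    (hcyc : ∀ e ∈ G.edgeSet, {c : G.Subgraph | IsCycleSub G g c ∧ e ∈ c.edgeSet}.ncard = l) :
    2 * g ∣ k * #S * l := by
  set D := {p ∈ S ×ˢ S | G.Adj p.1 p.2}
  set C : Sym2 V → Set G.Subgraph := fun e => {c | IsCycleSub G g c ∧ e ∈ c.edgeSet}
  have hCfin : ∀ p ∈ D, (C s(p.1, p.2)).Finite := fun p hp =>
    Set.finite_of_ncard_pos (hcyc s(p.1, p.2) (mem_filter.mp hp).2 ▸ hl)
  have hfin : (⋃ p ∈ D, C s(p.1, p.2)).Finite := D.finite_toSet.biUnion hCfin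
  have hcount := sum_card_bipartiteAbove_eq_sum_card_bipartiteBelow (s := D)
    (t := hfin.toFinset) (r := fun p c => s(p.1, p.2) ∈ c.edgeSet)
  have hleft : ∀ p ∈ D,
      #(bipartiteAbove (fun p c => s(p.1, p.2) ∈ c.edgeSet) hfin.toFinset p) = l := by
    intro p hp
    rw [← hcyc s(p.1, p.2) (mem_filter.mp hp).2, ← Set.ncard_coe_finset]
    congr 1
    ext c
    simp only [bipartiteAbove, coe_filter, Set.Finite.mem_toFinset, Set.mem_iUnion]
    exact ⟨fun ⟨⟨_, _, hc, _⟩, he⟩ => ⟨hc, he⟩, fun h => ⟨⟨p, hp, h⟩, h.2⟩⟩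
  have hright : ∀ c ∈ hfin.toFinset,
      #(bipartiteBelow (fun p c => s(p.1, p.2) ∈ c.edgeSet) D c) = 2 * g := by
    intro c hc
    simp only [Set.Finite.mem_toFinset, Set.mem_iUnion] at hc
    obtain ⟨p, hp, ⟨a, w, hw, hlen, rfl⟩, he⟩ := hc
    rw [Walk.mem_edges_toSubgraph] at he
    have hpw := w.fst_mem_support_of_mem_edges he
    rw [← w.toSubgraph_rotate hpw, ← hlen, ← w.length_rotate _ hpw, bipartiteBelow,
      filter_filter]
    simp only [Walk.mem_edges_toSubgraph]
    exact card_filter_mem_edges_of_isCycle hS (mem_product.mp (mem_filter.mp hp).1).1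
      (hw.rotate hpw)
  rw [sum_congr rfl hleft, sum_congr rfl hright, sum_const, sum_const, smul_eq_mul, smul_eq_mul,
    card_filter_adj_of_closed hS hdeg] at hcount
  exact ⟨_, hcount.trans (mul_comm _ _)⟩

lemma exists_neighborFinset_eq_insert {k : ℕ} (hreg : G.IsRegularOfDegree (k + 1)) {p : V}
    {T : Finset V} (hT : T ⊆ G.neighborFinset p) (hcard : #T = k) :
    ∃ r ∉ T, G.neighborFinset p = insert r T := by
  obtain ⟨r, hr⟩ := card_eq_one.mp <| show #(G.neighborFinset p \ T) = 1 by
    rw [card_sdiff_of_subset hT, card_neighborFinset_eq_degree, hreg p, hcard,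
      Nat.add_sub_cancel_left]
  have hr' := mem_sdiff.mp (hr ▸ mem_singleton_self r)
  refine ⟨r, hr'.2, ?_⟩
  rw [insert_eq, ← hr, union_comm, union_sdiff_of_subset hT]

lemma eq_of_adj_of_neighborFinset_eq_insert {p r y : V} {T B : Finset V}
    (hN : G.neighborFinset p = insert r T) (hT : T ⊆ B) (hy : G.Adj p y) (hyB : y ∉ B) :
    y = r := by
  have hy' := (mem_neighborFinset _ _ _).mpr hy
  rw [hN, mem_insert] at hy'
  exact hy'.resolve_right fun h => hyB (hT h)

variable (G) in
noncomputable def pentagonPairs (u v : V) : Finset (V × V) :=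
  ((G.neighborFinset u).erase v ×ˢ (G.neighborFinset v).erase u).filter
    fun p => ∃ w, G.Adj p.1 w ∧ G.Adj w p.2

lemma mem_pentagonPairs {u v : V} {p : V × V} : p ∈ G.pentagonPairs u v ↔
    (G.Adj u p.1 ∧ p.1 ≠ v) ∧ (G.Adj v p.2 ∧ p.2 ≠ u) ∧ ∃ w, G.Adj p.1 w ∧ G.Adj w p.2 := by
  simp only [pentagonPairs, Finset.mem_filter, Finset.mem_product, Finset.mem_erase,
    mem_neighborFinset]
  tauto

/-- A 5-cycle through `u v` is `u x w y v u`, and girth 5 makes `w` the unique common neighbour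
of `x` and `y`. -/
theorem ncard_isCycleSub_five_eq_card_pentagonPairs (hg : 5 ≤ G.egirth) {u v : V}
    (huv : G.Adj u v) :
    {c : G.Subgraph | IsCycleSub G 5 c ∧ s(u, v) ∈ c.edgeSet}.ncard =
      #(G.pentagonPairs u v) := by
  have hpair : ∀ p ∈ (G.pentagonPairs u v : Set (V × V)),
      G.Adj u p.1 ∧ G.Adj v p.2 ∧ ∃ w, G.Adj p.1 w ∧ G.Adj w p.2 := fun p hp => by
    have := mem_pentagonPairs.mp hp
    tauto
  rw [← Set.ncard_coe_finset]
  symm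
  refine Set.ncard_congr (fun p hp => (pentagon (hpair p hp).1 (hpair p hp).2.2.choose_spec.1
    (hpair p hp).2.2.choose_spec.2 (hpair p hp).2.1.symm huv.symm).toSubgraph) ?_ ?_ ?_
  · intro p hp
    refine ⟨⟨u, _, pentagon_isCycle hg .., rfl, rfl⟩, ?_⟩
    simp [mem_pentagon_edges, Sym2.eq_swap]
  · rintro ⟨x, y⟩ ⟨x', y'⟩ hp hp' h
    have hx := congrArg (fun c : G.Subgraph => c.Adj u x') h
    have hy := congrArg (fun c : G.Subgraph => c.Adj v y') h
    simp only [(pentagon_toSubgraph_adj_iff hg).1, (pentagon_toSubgraph_adj_iff hg).2] at hx hy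
    have hx' := (mem_pentagonPairs.mp hp').1.2
    have hy' := (mem_pentagonPairs.mp hp').2.1.2
    grind
  · rintro c ⟨hc, huvc⟩
    obtain ⟨x, w, y, hux, hxw, hwy, hyv, hvu, rfl⟩ := hc.exists_eq_pentagon hg huvc
    obtain ⟨hxy, hxv, -, -, hyu⟩ := pentagon_distinct hg hux hxw hwy hyv hvu
    have hp : (x, y) ∈ (G.pentagonPairs u v : Set (V × V)) :=
      mem_pentagonPairs.mpr ⟨⟨hux, hxv⟩, ⟨hyv.symm, hyu⟩, w, hxw, hwy⟩
    obtain ⟨hxw', hw'y⟩ := (hpair _ hp).2.2.choose_spec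
    exact ⟨_, hp,
      pentagon_toSubgraph_congr (eq_of_adj_of_adj hg hxy hxw'.symm hw'y hxw.symm hwy)⟩

section Branch

variable (G) in
noncomputable def branch (u x : V) : Finset V := (G.neighborFinset x).erase u

variable (G) in
noncomputable def linkCount (u s x : V) : ℕ :=
  #{t ∈ G.branch u x | ∃ p ∈ G.branch u s, G.Adj p t}

variable (G) in
noncomputable def twoBall (u : V) : Finset V :=
  insert u (G.neighborFinset u ∪ (G.neighborFinset u).biUnion (G.branch u))

variable {u x s s' q q' : V}

@[simp]
lemma mem_branch {t : V} : t ∈ G.branch u x ↔ G.Adj x t ∧ t ≠ u := by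
  simp [branch, and_comm]

lemma card_branch {k : ℕ} (hreg : G.IsRegularOfDegree k) (hux : G.Adj u x) :
    #(G.branch u x) = k - 1 := by
  rw [branch, card_erase_of_mem (by simpa using hux.symm), card_neighborFinset_eq_degree, hreg x]

lemma linkCount_le {k : ℕ} (hreg : G.IsRegularOfDegree k) (hux : G.Adj u x) (s : V) :
    G.linkCount u s x ≤ k - 1 :=
  card_branch hreg hux ▸ card_filter_le _ _

lemma card_pentagonPairs_eq_sum_linkCount (hg : 5 ≤ G.egirth) (hux : G.Adj u x) :
    #(G.pentagonPairs u x) = ∑ s ∈ (G.neighborFinset u).erase x, G.linkCount u s x := by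
  rw [pentagonPairs, card_filter, sum_product]
  refine sum_congr rfl fun s hs => ?_
  rw [linkCount, card_filter]
  refine sum_congr rfl fun t ht => if_congr ?_ rfl rfl
  simp only [mem_erase, mem_neighborFinset, mem_branch] at hs ht
  constructor
  · rintro ⟨p, hsp, hpt⟩
    refine ⟨p, mem_branch.mpr ⟨hsp, ?_⟩, hpt⟩
    rintro rfl
    exact not_adj_of_adj_of_adj hg hux ht.1 hpt.symm
  · rintro ⟨p, hp, hpt⟩
    exact ⟨p, (mem_branch.mp hp).1, hpt⟩

lemma exists_linkCount_eq_two (hreg : G.IsRegularOfDegree 4) (hux : G.Adj u x)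
    (hrow : ∑ s ∈ (G.neighborFinset u).erase x, G.linkCount u s x = 8) :
    ∃ s₀ ∈ (G.neighborFinset u).erase x, G.linkCount u s₀ x = 2 ∧
      ∀ s ∈ (G.neighborFinset u).erase x, s ≠ s₀ → G.linkCount u s x = 3 := by
  obtain ⟨a, b, c, hab, hac, hbc, habc⟩ := card_eq_three.mp <| show
    #((G.neighborFinset u).erase x) = 3 by
      rw [card_erase_of_mem (mem_neighborFinset _ _ _ |>.mpr hux), card_neighborFinset_eq_degree,
        hreg u]
  rw [habc] at hrow ⊢
  rw [sum_insert (by simp [hab, hac]), sum_insert (by simp [hbc]), sum_singleton] at hrow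
  have ha := linkCount_le hreg hux a
  have hb := linkCount_le hreg hux b
  have hc := linkCount_le hreg hux c
  simp only [mem_insert, mem_singleton, forall_eq_or_imp, forall_eq, exists_eq_or_imp,
    exists_eq_left, ne_eq, not_true_eq_false, IsEmpty.forall_iff, hab, hac, hbc, Ne.symm hab,
    Ne.symm hac, Ne.symm hbc, not_false_eq_true, forall_const, true_and, and_true]
  omega

@[simp]
lemma mem_twoBall {y : V} :
    y ∈ G.twoBall u ↔ y = u ∨ G.Adj u y ∨ ∃ x, G.Adj u x ∧ G.Adj x y := by
  simp only [twoBall, mem_insert, mem_union, mem_neighborFinset, mem_biUnion, mem_branch]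
  grind

lemma mem_twoBall_of_mem_branch {s q : V} (hus : G.Adj u s) (hq : q ∈ G.branch u s) :
    q ∈ G.twoBall u :=
  mem_twoBall.mpr (Or.inr (Or.inr ⟨s, hus, (mem_branch.mp hq).1⟩))

lemma card_twoBall {k : ℕ} (hreg : G.IsRegularOfDegree k) (hg : 5 ≤ G.egirth) :
    #(G.twoBall u) = k ^ 2 + 1 := by
  have hu : u ∉ G.neighborFinset u ∪ (G.neighborFinset u).biUnion (G.branch u) := by
    simp only [mem_union, mem_neighborFinset, mem_biUnion, mem_branch]
    simp
  have hdisj : Disjoint (G.neighborFinset u) ((G.neighborFinset u).biUnion (G.branch u)) := by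
    simp only [Finset.disjoint_left, mem_neighborFinset, mem_biUnion, mem_branch, not_exists,
      not_and]
    exact fun t hut x hux hxt _ => not_adj_of_adj_of_adj hg hux hxt hut.symm
  have hpair : ((G.neighborFinset u : Set V)).PairwiseDisjoint (G.branch u) := by
    intro x hx y hy hxy
    rw [Function.onFun, Finset.disjoint_left]
    intro t hxt hyt
    rw [mem_branch] at hxt hyt
    exact hxt.2 <| eq_of_adj_of_adj hg hxy hxt.1.symm hyt.1.symm (by simpa using hx)
      (by simpa using hy)
  rw [twoBall, card_insert_of_notMem hu, card_union_of_disjoint hdisj, card_biUnion hpair,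
    sum_congr rfl fun x hx => card_branch hreg ((mem_neighborFinset _ _ _).mp hx), sum_const,
    card_neighborFinset_eq_degree, hreg u, smul_eq_mul]
  cases k <;> simp [sq, Nat.mul_succ]; ring

lemma not_adj_of_mem_branch (hg : 5 ≤ G.egirth) (hus : G.Adj u s) (hq : q ∈ G.branch u s) :
    ¬ G.Adj u q :=
  fun huq => not_adj_of_adj_of_adj hg hus (mem_branch.mp hq).1 huq.symm

lemma eq_of_mem_branch_of_mem_branch (hg : 5 ≤ G.egirth) (hus : G.Adj u s) (hus' : G.Adj u s')
    (hq : q ∈ G.branch u s) (hq' : q ∈ G.branch u s') : s = s' := by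
  by_contra hss'
  rw [mem_branch] at hq hq'
  exact hq.2 (eq_of_adj_of_adj hg hss' hq.1.symm hq'.1.symm hus hus')

lemma eq_of_adj_of_mem_branch (hg : 5 ≤ G.egirth) (hux : G.Adj u x) (hus : G.Adj u s) {p : V}
    (hp : p ∈ G.branch u x) (hq : q ∈ G.branch u s) (hq' : q' ∈ G.branch u s) (hpq : G.Adj p q)
    (hpq' : G.Adj p q') : q = q' := by
  have hps : p ≠ s := by
    rintro rfl
    exact not_adj_of_mem_branch hg hux hp hus
  exact eq_of_adj_of_adj hg hps hpq.symm (mem_branch.mp hq).1.symm hpq'.symm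
    (mem_branch.mp hq').1.symm

lemma exists_mem_branch_of_adj_of_notMem_twoBall {p y : V} (hp : p ∈ G.twoBall u)
    (hy : y ∉ G.twoBall u) (hpy : G.Adj p y) : ∃ s, G.Adj u s ∧ p ∈ G.branch u s := by
  simp only [mem_twoBall, not_or, not_exists, not_and] at hp hy
  rcases hp with rfl | hup | ⟨s, hus, hsp⟩
  · exact absurd hpy hy.2.1
  · exact absurd hpy (hy.2.2 p hup)
  · exact ⟨s, hus, mem_branch.mpr ⟨hsp, by rintro rfl; exact hy.2.1 hpy⟩⟩

lemma eq_or_exists_mem_branch_of_adj_of_mem_twoBall (hg : 5 ≤ G.egirth) (hux : G.Adj u x)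
    {p y : V} (hp : p ∈ G.branch u x) (hy : y ∈ G.twoBall u) (hpy : G.Adj p y) :
    y = x ∨ ∃ s, G.Adj u s ∧ s ≠ x ∧ y ∈ G.branch u s := by
  have hyu : y ≠ u := by
    rintro rfl
    exact not_adj_of_mem_branch hg hux hp hpy.symm
  rw [mem_branch] at hp
  rcases (mem_twoBall.mp hy) with rfl | huy | ⟨s, hus, hsy⟩
  · exact absurd rfl hyu
  · by_contra! h
    exact hp.2.symm (eq_of_adj_of_adj hg h.1.symm hux huy hp.1.symm hpy)
  · refine Or.inr ⟨s, hus, ?_, mem_branch.mpr ⟨hsy, hyu⟩⟩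
    rintro rfl
    exact not_adj_of_adj_of_adj hg hp.1 hpy hsy.symm

lemma exists_neighborFinset_eq_of_mem_branch (hreg : G.IsRegularOfDegree 4) (hg : 5 ≤ G.egirth)
    (hux : G.Adj u x) (hus : G.Adj u s) (hus' : G.Adj u s') (hss' : s ≠ s') {p : V}
    (hp : p ∈ G.branch u x) (hq : q ∈ G.branch u s) (hq' : q' ∈ G.branch u s')
    (hpq : G.Adj p q) (hpq' : G.Adj p q') :
    ∃ r ∉ ({x, q, q'} : Finset V), G.neighborFinset p = insert r {x, q, q'} := by
  have hxq : x ≠ q := by rintro rfl; exact not_adj_of_mem_branch hg hus hq hux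
  have hxq' : x ≠ q' := by rintro rfl; exact not_adj_of_mem_branch hg hus' hq' hux
  have hqq' : q ≠ q' := by
    rintro rfl
    exact hss' (eq_of_mem_branch_of_mem_branch hg hus hus' hq hq')
  refine exists_neighborFinset_eq_insert (k := 3) hreg ?_ ?_
  · simp [insert_subset_iff, (mem_branch.mp hp).1.symm, hpq, hpq']
  · rw [card_insert_of_notMem (by simp [hxq, hxq']), card_pair hqq']

variable (G) in
def IsBranchExit (u x w z : V) : Prop :=
  w ∈ G.branch u x ∧ G.Adj w z ∧ z ∉ G.twoBall u ∧
    ∀ p ∈ G.branch u x, ∀ y, G.Adj p y → y ∉ G.twoBall u → p = w ∧ y = z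

lemma insert_subset_twoBall (hux : G.Adj u x) (hus : G.Adj u s) (hus' : G.Adj u s')
    (hq : q ∈ G.branch u s) (hq' : q' ∈ G.branch u s') :
    ({x, q, q'} : Finset V) ⊆ G.twoBall u := by
  simp only [insert_subset_iff, singleton_subset_iff]
  exact ⟨by simp [hux], mem_twoBall_of_mem_branch hus hq, mem_twoBall_of_mem_branch hus' hq'⟩

lemma neighborFinset_subset_twoBall (hg : 5 ≤ G.egirth) (hux : G.Adj u x) {s₀ q₀ r p : V}
    (hus₀ : G.Adj u s₀) (hus : G.Adj u s) (hus' : G.Adj u s') (hs₀s : s₀ ≠ s) (hs₀s' : s₀ ≠ s')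
    (hq₀ : q₀ ∈ G.branch u s₀) (hq : q ∈ G.branch u s) (hq' : q' ∈ G.branch u s')
    (hpq₀ : G.Adj p q₀) (hN : G.neighborFinset p = insert r {x, q, q'}) :
    G.neighborFinset p ⊆ G.twoBall u := by
  have hq₀T : q₀ ∉ ({x, q, q'} : Finset V) := by
    simp only [mem_insert, mem_singleton, not_or]
    refine ⟨?_, ?_, ?_⟩ <;> rintro rfl
    · exact not_adj_of_mem_branch hg hus₀ hq₀ hux
    · exact hs₀s (eq_of_mem_branch_of_mem_branch hg hus₀ hus hq₀ hq)
    · exact hs₀s' (eq_of_mem_branch_of_mem_branch hg hus₀ hus' hq₀ hq')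
  have hq₀r : q₀ = r := by
    have := (mem_neighborFinset _ _ _).mpr hpq₀
    rw [hN, mem_insert] at this
    exact this.resolve_right hq₀T
  rw [hN, ← hq₀r]
  exact insert_subset (mem_twoBall_of_mem_branch hus₀ hq₀)
    (insert_subset_twoBall hux hus hus' hq hq')

lemma notMem_twoBall_of_neighborFinset_eq (hg : 5 ≤ G.egirth) (hux : G.Adj u x)
    {s₀ s₁ s₂ w q₁ q₂ r : V} (hN : (G.neighborFinset u).erase x = {s₀, s₁, s₂})
    (hw : w ∈ G.branch u x) (hw₀ : ¬ ∃ q ∈ G.branch u s₀, G.Adj q w)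
    (hq₁ : q₁ ∈ G.branch u s₁) (hq₂ : q₂ ∈ G.branch u s₂)
    (hNw : G.neighborFinset w = insert r {x, q₁, q₂}) (hr : r ∉ ({x, q₁, q₂} : Finset V)) :
    r ∉ G.twoBall u := by
  have hwN : ∀ {y}, y ∈ insert r ({x, q₁, q₂} : Finset V) → G.Adj w y := fun hy =>
    (mem_neighborFinset _ _ _).mp (hNw ▸ hy)
  have hwr := hwN (mem_insert_self r _)
  intro hrB
  obtain rfl | ⟨s, hus, hsx, hrs⟩ := eq_or_exists_mem_branch_of_adj_of_mem_twoBall hg hux hw hrB hwr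
  · simp at hr
  have hs : s ∈ ({s₀, s₁, s₂} : Finset V) := by
    rw [← hN, mem_erase, mem_neighborFinset]
    exact ⟨hsx, hus⟩
  simp only [mem_insert, mem_singleton] at hs hr
  rcases hs with rfl | rfl | rfl
  · exact hw₀ ⟨r, hrs, hwr.symm⟩
  · exact hr (Or.inr (Or.inl (eq_of_adj_of_mem_branch hg hux hus hw hrs hq₁ hwr
      (hwN (by simp)))))
  · exact hr (Or.inr (Or.inr (eq_of_adj_of_mem_branch hg hux hus hw hrs hq₂ hwr
      (hwN (by simp)))))

lemma exists_isBranchExit_of_linked (hreg : G.IsRegularOfDegree 4) (hg : 5 ≤ G.egirth)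
    (hux : G.Adj u x) {s₀ s₁ s₂ w : V} (hN : (G.neighborFinset u).erase x = {s₀, s₁, s₂})
    (h01 : s₀ ≠ s₁) (h02 : s₀ ≠ s₂) (h12 : s₁ ≠ s₂)
    (hlink₁ : ∀ p ∈ G.branch u x, ∃ q ∈ G.branch u s₁, G.Adj p q)
    (hlink₂ : ∀ p ∈ G.branch u x, ∃ q ∈ G.branch u s₂, G.Adj p q)
    (hw : w ∈ G.branch u x) (hw₀ : ¬ ∃ q ∈ G.branch u s₀, G.Adj q w)
    (hlink₀ : ∀ p ∈ G.branch u x, p ≠ w → ∃ q ∈ G.branch u s₀, G.Adj q p) :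
    ∃ z, G.IsBranchExit u x w z := by
  have hmem : ∀ s ∈ ({s₀, s₁, s₂} : Finset V), G.Adj u s := fun s hs => by
    rw [← hN, mem_erase, mem_neighborFinset] at hs
    exact hs.2
  have hus₀ := hmem s₀ (by simp)
  have hus₁ := hmem s₁ (by simp)
  have hus₂ := hmem s₂ (by simp)
  have hnbr : ∀ p ∈ G.branch u x, ∃ q₁ ∈ G.branch u s₁, ∃ q₂ ∈ G.branch u s₂,
      ∃ r ∉ ({x, q₁, q₂} : Finset V), G.neighborFinset p = insert r {x, q₁, q₂} := by
    intro p hp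
    obtain ⟨q₁, hq₁, hpq₁⟩ := hlink₁ p hp
    obtain ⟨q₂, hq₂, hpq₂⟩ := hlink₂ p hp
    exact ⟨q₁, hq₁, q₂, hq₂,
      exists_neighborFinset_eq_of_mem_branch hreg hg hux hus₁ hus₂ h12 hp hq₁ hq₂ hpq₁ hpq₂⟩
  obtain ⟨q₁, hq₁, q₂, hq₂, r, hr, hNw⟩ := hnbr w hw
  refine ⟨r, hw, (mem_neighborFinset _ _ _).mp (hNw ▸ mem_insert_self r _),
    notMem_twoBall_of_neighborFinset_eq hg hux hN hw hw₀ hq₁ hq₂ hNw hr,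
    fun p hp y hy hyB => ?_⟩
  obtain rfl : p = w := by
    by_contra hpw
    obtain ⟨q₁', hq₁', q₂', hq₂', r', -, hNp⟩ := hnbr p hp
    obtain ⟨q₀, hq₀, hq₀p⟩ := hlink₀ p hp hpw
    exact hyB (neighborFinset_subset_twoBall hg hux hus₀ hus₁ hus₂ h01 h02 hq₀ hq₁' hq₂'
      hq₀p.symm hNp ((mem_neighborFinset _ _ _).mpr hy))
  exact ⟨rfl, eq_of_adj_of_neighborFinset_eq_insert hNw (insert_subset_twoBall hux hus₁ hus₂ hq₁
    hq₂) hy hyB⟩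

lemma exists_isBranchExit (hreg : G.IsRegularOfDegree 4) (hg : 5 ≤ G.egirth) (hux : G.Adj u x)
    (hrow : ∑ s ∈ (G.neighborFinset u).erase x, G.linkCount u s x = 8) :
    ∃ w z, G.IsBranchExit u x w z := by
  obtain ⟨s₀, hs₀, h2, h3⟩ := exists_linkCount_eq_two hreg hux hrow
  obtain ⟨s₁, s₂, h12, hs₁₂⟩ := card_eq_two.mp <|
    show #(((G.neighborFinset u).erase x).erase s₀) = 2 by
      rw [card_erase_of_mem hs₀, card_erase_of_mem ((mem_neighborFinset _ _ _).mpr hux),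
        card_neighborFinset_eq_degree, hreg u]
  have hN : (G.neighborFinset u).erase x = {s₀, s₁, s₂} := by rw [← insert_erase hs₀, hs₁₂]
  have hs : ∀ s, s = s₁ ∨ s = s₂ → s ∈ (G.neighborFinset u).erase x ∧ s ≠ s₀ := fun s hs => by
    have : s ∈ ((G.neighborFinset u).erase x).erase s₀ := by rw [hs₁₂]; simpa using hs
    exact ⟨mem_of_mem_erase this, ne_of_mem_erase this⟩
  have hlink : ∀ s, s = s₁ ∨ s = s₂ → ∀ p ∈ G.branch u x, ∃ q ∈ G.branch u s, G.Adj p q := by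
    intro s hs' p hp
    obtain ⟨q, hq, hqp⟩ := card_filter_eq_iff.mp
      ((h3 s (hs s hs').1 (hs s hs').2).trans (card_branch hreg hux).symm) p hp
    exact ⟨q, hq, hqp.symm⟩
  obtain ⟨w, hw, hw₀, hlink₀⟩ := exists_not_and_forall_of_card_filter_add_one
    (s := G.branch u x) (P := fun t => ∃ q ∈ G.branch u s₀, G.Adj q t)
    (by rw [card_branch hreg hux]; exact congrArg (· + 1) h2)
  exact ⟨w, exists_isBranchExit_of_linked hreg hg hux hN (hs s₁ (Or.inl rfl)).2.symm
    (hs s₂ (Or.inr rfl)).2.symm h12 (hlink s₁ (Or.inl rfl)) (hlink s₂ (Or.inr rfl)) hw hw₀ hlink₀⟩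

lemma exists_adj_adj_of_isBranchExit (hreg : G.IsRegularOfDegree 4) (hux : G.Adj u x)
    {w z p : V} (hexit : G.IsBranchExit u x w z) (hpairs : #(G.pentagonPairs x w) = 8)
    (hp : p ∈ G.branch u x) (hpw : p ≠ w) : ∃ q, G.Adj p q ∧ G.Adj q z := by
  -- of the nine pairs in `(N(x) \ {w}) × (N(w) \ {x})` only `(u, z)` has no common neighbour,
  -- so the eight pentagons through `x w` use all the others
  obtain ⟨hw, hwz, hzB, -⟩ := hexit
  have hzx : z ≠ x := by rintro rfl; exact hzB (by simp [hux])
  have huz : (u, z) ∈ (G.neighborFinset x).erase w ×ˢ (G.neighborFinset w).erase x := by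
    simp [hux.symm, hwz, hzx, (mem_branch.mp hw).2.symm]
  have hsub : G.pentagonPairs x w ⊆
      ((G.neighborFinset x).erase w ×ˢ (G.neighborFinset w).erase x).erase (u, z) := by
    intro p hp
    refine mem_erase.mpr ⟨?_, filter_subset _ _ hp⟩
    rintro rfl
    obtain ⟨q, huq, hqz⟩ := (mem_pentagonPairs.mp hp).2.2
    exact hzB (mem_twoBall.mpr (Or.inr (Or.inr ⟨q, huq, hqz⟩)))
  have hcard : #(((G.neighborFinset x).erase w ×ˢ (G.neighborFinset w).erase x).erase (u, z)) ≤
      #(G.pentagonPairs x w) := by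
    rw [hpairs, card_erase_of_mem huz, card_product,
      card_erase_of_mem ((mem_neighborFinset _ _ _).mpr (mem_branch.mp hw).1),
      card_erase_of_mem ((mem_neighborFinset _ _ _).mpr (mem_branch.mp hw).1.symm),
      card_neighborFinset_eq_degree, card_neighborFinset_eq_degree, hreg x, hreg w]
  have hpz : (p, z) ∈ G.pentagonPairs x w := by
    rw [eq_of_subset_of_card_le hsub hcard]
    simp [hpw, hwz, hzx, (mem_branch.mp hp).1, (mem_branch.mp hp).2]
  exact (mem_pentagonPairs.mp hpz).2.2

lemma three_le_card_filter_exit_eq (hreg : G.IsRegularOfDegree 4) (hg : 5 ≤ G.egirth)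
    {w z : V → V} (hexit : ∀ s, G.Adj u s → G.IsBranchExit u s (w s) (z s))
    (hpairs : ∀ s, G.Adj u s → #(G.pentagonPairs s (w s)) = 8) (hux : G.Adj u x) :
    3 ≤ #{s ∈ G.neighborFinset u | z s = z x} := by
  have hwx := hexit x hux
  -- the common neighbour of `p` and `z x` is the exit vertex of another branch
  have hmeet : ∀ p ∈ (G.branch u x).erase (w x),
      ∃ s, G.Adj u s ∧ s ≠ x ∧ G.Adj p (w s) ∧ z s = z x := by
    intro p hp
    obtain ⟨hpw, hp⟩ := mem_erase.mp hp
    obtain ⟨q, hpq, hqz⟩ := exists_adj_adj_of_isBranchExit hreg hux hwx (hpairs x hux) hp hpw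
    have hqB : q ∈ G.twoBall u := by_contra fun hqB => hpw (hwx.2.2.2 p hp q hpq hqB).1
    obtain ⟨s, hus, hqs⟩ := exists_mem_branch_of_adj_of_notMem_twoBall hqB hwx.2.2.1 hqz
    obtain ⟨rfl, hzs⟩ := (hexit s hus).2.2.2 q hqs (z x) hqz hwx.2.2.1
    refine ⟨s, hus, ?_, hpq, hzs.symm⟩
    rintro rfl
    exact not_adj_of_adj_of_adj hg (mem_branch.mp hp).1 hpq (mem_branch.mp hqs).1.symm
  obtain ⟨p₁, p₂, hp₁₂, hp⟩ := card_eq_two.mp <| show #((G.branch u x).erase (w x)) = 2 by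
    rw [card_erase_of_mem hwx.1, card_branch hreg hux]
  obtain ⟨s₁, hus₁, hs₁x, hp₁, hz₁⟩ := hmeet p₁ (by simp [hp])
  obtain ⟨s₂, hus₂, hs₂x, hp₂, hz₂⟩ := hmeet p₂ (by simp [hp])
  have hs₁₂ : s₁ ≠ s₂ := by
    rintro rfl
    have hmem : ∀ p ∈ ({p₁, p₂} : Finset V), G.Adj x p := fun p hp' =>
      (mem_branch.mp (mem_of_mem_erase (hp ▸ hp'))).1
    have hp₁x := hmem p₁ (by simp)
    have hp₂x := hmem p₂ (by simp)
    have := eq_of_adj_of_adj hg hp₁₂ hp₁.symm hp₂.symm hp₁x hp₂x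
    exact not_adj_of_mem_branch hg hus₁ (hexit s₁ hus₁).1 (this ▸ hux)
  calc 3 = #({x, s₁, s₂} : Finset V) := by
        rw [card_insert_of_notMem (by simp [hs₁x.symm, hs₂x.symm]), card_pair hs₁₂]
    _ ≤ _ := card_le_card (by simp [insert_subset_iff, hux, hus₁, hus₂, hz₁, hz₂])

lemma exit_eq_of_adj (hreg : G.IsRegularOfDegree 4) (hg : 5 ≤ G.egirth) {w z : V → V}
    (hexit : ∀ s, G.Adj u s → G.IsBranchExit u s (w s) (z s))
    (hpairs : ∀ s, G.Adj u s → #(G.pentagonPairs s (w s)) = 8) {s : V} (hus : G.Adj u s)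
    (hux : G.Adj u x) : z s = z x := by
  have hs := three_le_card_filter_exit_eq hreg hg hexit hpairs hus
  have hx := three_le_card_filter_exit_eq hreg hg hexit hpairs hux
  obtain ⟨t, ht⟩ := inter_nonempty_of_card_lt_card_add_card (s := G.neighborFinset u)
    (filter_subset (fun t => z t = z s) _) (filter_subset (fun t => z t = z x) _)
    (by rw [card_neighborFinset_eq_degree, hreg u]; omega)
  simp only [mem_inter, mem_filter] at ht
  exact ht.1.2.symm.trans ht.2.2

lemma adj_mem_insert_twoBall (hreg : G.IsRegularOfDegree 4) (hg : 5 ≤ G.egirth) {w z : V → V}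
    (hexit : ∀ s, G.Adj u s → G.IsBranchExit u s (w s) (z s)) {z₀ : V}
    (hz : ∀ s, G.Adj u s → z s = z₀) {a b : V} (ha : a ∈ insert z₀ (G.twoBall u))
    (hab : G.Adj a b) : b ∈ insert z₀ (G.twoBall u) := by
  rcases mem_insert.mp ha with rfl | ha
  · have hinj : Set.InjOn w (G.neighborFinset u) := fun s hs s' hs' h =>
      eq_of_mem_branch_of_mem_branch hg (by simpa using hs) (by simpa using hs')
        (hexit s (by simpa using hs)).1 (h ▸ (hexit s' (by simpa using hs')).1)
    have hsub : (G.neighborFinset u).image w ⊆ G.neighborFinset a := by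
      simp only [image_subset_iff, mem_neighborFinset]
      exact fun s hs => hz s hs ▸ (hexit s hs).2.1.symm
    have heq := eq_of_subset_of_card_le hsub (by
      rw [card_image_of_injOn hinj, card_neighborFinset_eq_degree, card_neighborFinset_eq_degree,
        hreg, hreg])
    obtain ⟨s, hs, rfl⟩ := mem_image.mp (heq ▸ (mem_neighborFinset _ _ _).mpr hab)
    have hus : G.Adj u s := by simpa using hs
    exact mem_insert_of_mem (mem_twoBall_of_mem_branch hus (hexit s hus).1)
  · by_cases hb : b ∈ G.twoBall u
    · exact mem_insert_of_mem hb
    obtain ⟨s, hus, has⟩ := exists_mem_branch_of_adj_of_notMem_twoBall ha hb hab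
    exact mem_insert.mpr (Or.inl (((hexit s hus).2.2.2 a has b hab hb).2.trans (hz s hus)))

end Branch

theorem isEmpty_of_forall_ncard_isCycleSub_eq_eight (hreg : G.IsRegularOfDegree 4)
    (hg : 5 ≤ G.egirth)
    (h8 : ∀ e ∈ G.edgeSet, {c : G.Subgraph | IsCycleSub G 5 c ∧ e ∈ c.edgeSet}.ncard = 8) :
    IsEmpty V := by
  refine ⟨fun u => ?_⟩
  have hpairs : ∀ {a b}, G.Adj a b → #(G.pentagonPairs a b) = 8 := fun h =>
    (ncard_isCycleSub_five_eq_card_pentagonPairs hg h).symm.trans (h8 _ h)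
  choose! w z hexit using fun x (hux : G.Adj u x) => exists_isBranchExit hreg hg hux
    ((card_pentagonPairs_eq_sum_linkCount hg hux).symm.trans (hpairs hux))
  obtain ⟨x, hux⟩ := (G.degree_pos_iff_exists_adj u).mp (by rw [hreg u]; norm_num)
  have hz : ∀ s, G.Adj u s → z s = z x := fun s hus =>
    exit_eq_of_adj hreg hg hexit (fun s hus => hpairs (mem_branch.mp (hexit s hus).1).1) hus hux
  have hdvd := two_mul_dvd_of_closed (by norm_num : 0 < 8) (S := insert (z x) (G.twoBall u))
    (fun a ha b hab => adj_mem_insert_twoBall hreg hg hexit hz ha hab) (fun a _ => hreg a) h8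
  rw [card_insert_of_notMem (hexit x hux).2.2.1, card_twoBall hreg hg] at hdvd
  norm_num at hdvd

end SimpleGraph

theorem stmt_14_general :
    ¬ ∃ (V : Type) (G : SimpleGraph V) (v : ℕ), IsEGR G v 4 5 8 := by
  rintro ⟨V, G, v, -, hdeg, hgirth, h8⟩
  have : G.LocallyFinite := fun x =>
    (Set.finite_of_ncard_pos (by rw [hdeg x]; norm_num : 0 < (G.neighborSet x).ncard)).fintype
  have hreg : G.IsRegularOfDegree 4 := fun x => by
    rw [← card_neighborFinset_eq_degree, neighborFinset, ← Set.ncard_eq_toFinset_card', hdeg]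
  have hcyc : ¬ G.IsAcyclic := fun h => by rw [← girth_eq_zero, hgirth] at h; omega
  have hg : 5 ≤ G.egirth := by
    rw [← ENat.natCast_toNat (mt egirth_eq_top.mp hcyc)]
    exact_mod_cast hgirth.ge
  obtain ⟨u, -⟩ : ∃ u, ¬ ∀ c : G.Walk u u, ¬ c.IsCycle := by simpa [IsAcyclic] using hcyc
  exact (isEmpty_of_forall_ncard_isCycleSub_eq_eight hreg hg h8).elim u

/-- There is no egr(v,4,5,8)-graph (using the known fact that there is no such graph on
18 vertices). -/
theorem stmt_14
    (known : ∀ (W : Type) (H : SimpleGraph W), ¬ IsEGR H 18 4 5 8) :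
    ¬ ∃ (V : Type) (G : SimpleGraph V) (v : ℕ), IsEGR G v 4 5 8 :=
  stmt_14_general
end

section
/- There is no egr(v,6,5,24)-graph, i.e., there is no 6-regular graph of girth 5 in which every edge lies on exactly 24 cycles of length 5. -/
open SimpleGraph

/-!
Fix a vertex `u` of a `k`-regular graph of girth five in which every edge lies on
`λ = (k - 1)^2 - 1` pentagons. For a neighbour `v` of `u`, the `k(k - 1)` vertices at distance two
from `u` are the other `k - 1` neighbours of `v`, the `λ` vertices opposite `uv` on a pentagon, and
a single vertex at distance three from `v`. Read at an edge `ua`, this says that exactly one edge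
joins `G.neighborSet a \ {u}` to the third sphere around `u`; read at an edge `bz` from the second
to the third sphere, it gives every vertex of the third sphere `k - 1` neighbours in the second
sphere. Hence the third sphere is a single vertex adjacent only to the second sphere, and the ball
of radius three around `u` is a union of components with `k^2 + 2` vertices, itself an
egr(k^2 + 2, k, 5, λ)-graph. For `k = 6`, `λ = 24` it has 38 vertices.
-/

open SimpleGraph Set

namespace EGR

lemma ncard_le_ncard_of_exists_rel {α β : Type*} {s : Set α} {t : Set β} (r : α → β → Prop)
    (hex : ∀ a ∈ s, ∃ b ∈ t, r a b) (hinj : ∀ a ∈ s, ∀ a' ∈ s, ∀ b ∈ t, r a b → r a' b → a = a')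
    (ht : t.Finite) : s.ncard ≤ t.ncard := by
  obtain rfl | ⟨a₀, ha₀⟩ := s.eq_empty_or_nonempty
  · simp
  have : Nonempty β := ⟨(hex a₀ ha₀).choose⟩
  choose! f hft hr using hex
  exact ncard_le_ncard_of_injOn f hft
    (fun a ha a' ha' he => hinj a ha a' ha' (f a) (hft a ha) (hr a ha) (he ▸ hr a' ha')) ht

variable {V : Type*} {G : SimpleGraph V} {u v x y z w : V}

lemma not_adj_of_four_le_egirth (hG : 4 ≤ G.egirth) (hxy : G.Adj x y) (hyz : G.Adj y z) :
    ¬ G.Adj x z := by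
  intro hxz
  have hc : (Walk.cons hxy (Walk.cons hyz (Walk.cons hxz.symm Walk.nil))).IsCycle := by
    simp [Walk.cons_isCycle_iff, Walk.cons_isPath_iff, hxy.ne, hyz.ne, hxz.ne, hxy.ne.symm,
      hxz.ne.symm]
  have := hG.trans (egirth_le_length hc)
  norm_num at this

lemma eq_of_adj_of_five_le_egirth (hG : 5 ≤ G.egirth) (hxz : x ≠ z) (hxy : G.Adj x y)
    (hyz : G.Adj y z) (hxw : G.Adj x w) (hwz : G.Adj w z) : y = w := by
  by_contra hyw
  have hc : (Walk.cons hxy (Walk.cons hyz (Walk.cons hwz.symm (Walk.cons hxw.symm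
      Walk.nil)))).IsCycle := by
    simp [Walk.cons_isCycle_iff, Walk.cons_isPath_iff, hxy.ne, hyz.ne, hxw.ne, hxy.ne.symm,
      hxw.ne.symm, hwz.ne.symm, hxz, hyw, hxz.symm]
  have := hG.trans (egirth_le_length hc)
  norm_num at this

def fourPaths (G : SimpleGraph V) (u v : V) : Set (V × V × V) :=
  {t | G.Adj u t.1 ∧ G.Adj t.1 t.2.1 ∧ G.Adj t.2.1 t.2.2 ∧ G.Adj t.2.2 v}

def pentagon {t : V × V × V} (huv : G.Adj u v) (ht : t ∈ fourPaths G u v) : G.Walk u u :=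
  .cons huv (.cons ht.2.2.2.symm (.cons ht.2.2.1.symm (.cons ht.2.1.symm (.cons ht.1.symm .nil))))

lemma ne_of_mem_fourPaths (hG : 4 ≤ G.egirth) (huv : G.Adj u v) {t : V × V × V}
    (ht : t ∈ fourPaths G u v) :
    t.1 ≠ v ∧ t.2.1 ≠ u ∧ t.2.1 ≠ v ∧ t.2.2 ≠ u ∧ t.1 ≠ t.2.2 := by
  obtain ⟨a, b, c⟩ := t
  obtain ⟨h1 : G.Adj u a, h2 : G.Adj a b, h3 : G.Adj b c, h4 : G.Adj c v⟩ := ht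
  refine ⟨fun he => ?_, fun he => ?_, fun he => ?_, fun he => ?_, fun he => ?_⟩ <;>
    dsimp only at he <;> subst he
  · exact not_adj_of_four_le_egirth hG h2 h3 h4.symm
  · exact not_adj_of_four_le_egirth hG h3 h4 huv
  · exact not_adj_of_four_le_egirth hG h1 h2 huv
  · exact not_adj_of_four_le_egirth hG h1 h2 h3.symm
  · exact not_adj_of_four_le_egirth hG h1 h4 huv

lemma pentagon_isCycle (hG : 4 ≤ G.egirth) (huv : G.Adj u v) {t : V × V × V}
    (ht : t ∈ fourPaths G u v) : (pentagon huv ht).IsCycle := by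
  obtain ⟨a, b, c⟩ := t
  obtain ⟨n1, n2, n3, n4, n5⟩ := ne_of_mem_fourPaths hG huv ht
  obtain ⟨h1 : G.Adj u a, h2 : G.Adj a b, h3 : G.Adj b c, h4 : G.Adj c v⟩ := ht
  simp [pentagon, Walk.cons_isCycle_iff, Walk.cons_isPath_iff, huv.ne, h1.ne.symm, h2.ne.symm,
    h3.ne.symm, h4.ne.symm, huv.ne.symm, n2, n4, n1.symm, n2.symm, n3.symm, n4.symm, n5.symm]

lemma mem_edges_pentagon (hG : 4 ≤ G.egirth) (huv : G.Adj u v) {t : V × V × V}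
    (ht : t ∈ fourPaths G u v) (x : V) :
    (s(u, x) ∈ (pentagon huv ht).edges ↔ x = v ∨ x = t.1) ∧
    (s(v, x) ∈ (pentagon huv ht).edges ↔ x = u ∨ x = t.2.2) ∧
    (s(t.1, x) ∈ (pentagon huv ht).edges ↔ x = t.2.1 ∨ x = u) := by
  obtain ⟨a, b, c⟩ := t
  obtain ⟨n1, n2, n3, n4, n5⟩ := ne_of_mem_fourPaths hG huv ht
  obtain ⟨h1 : G.Adj u a, h2 : G.Adj a b, h3 : G.Adj b c, h4 : G.Adj c v⟩ := ht
  simp only [pentagon, Walk.edges_cons, Walk.edges_nil, List.mem_cons, List.not_mem_nil, or_false,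
    Sym2.eq_iff]
  grind [h1.ne, h2.ne, h3.ne, h4.ne, huv.ne]

lemma pentagon_toSubgraph_injective (hG : 4 ≤ G.egirth) (huv : G.Adj u v) {t t' : V × V × V}
    (ht : t ∈ fourPaths G u v) (ht' : t' ∈ fourPaths G u v)
    (h : (pentagon huv ht).toSubgraph = (pentagon huv ht').toSubgraph) : t = t' := by
  have hedges (e : Sym2 V) : e ∈ (pentagon huv ht).edges ↔ e ∈ (pentagon huv ht').edges := by
    simpa only [Walk.edgeSet_toSubgraph, Walk.mem_edgeSet] using Set.ext_iff.mp
      (congrArg Subgraph.edgeSet h) e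
  obtain ⟨a, b, c⟩ := t
  obtain ⟨a', b', c'⟩ := t'
  have E := mem_edges_pentagon hG huv ht
  have E' := mem_edges_pentagon hG huv ht'
  obtain ⟨hav, -, -, hcu, -⟩ := ne_of_mem_fourPaths hG huv ht
  obtain ⟨-, hbu', -, -, -⟩ := ne_of_mem_fourPaths hG huv ht'
  dsimp only at E E' hav hcu hbu'
  have ha : a = a' := ((E' a).1.mp ((hedges _).mp ((E a).1.mpr (.inr rfl)))).resolve_left hav
  have hc : c = c' := ((E' c).2.1.mp ((hedges _).mp ((E c).2.1.mpr (.inr rfl)))).resolve_left hcu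
  subst ha hc
  have hb : b' = b :=
    ((E b').2.2.mp ((hedges _).mpr ((E' b').2.2.mpr (.inl rfl)))).resolve_right hbu'
  rw [hb]

lemma exists_pentagon_eq (huv : G.Adj u v) {c : G.Subgraph}
    (hc : IsCycleSub G 5 c) (he : s(u, v) ∈ c.edgeSet) :
    ∃ t, ∃ ht : t ∈ fourPaths G u v, (pentagon huv ht).toSubgraph = c := by
  classical
  obtain ⟨x, w, hw, hl, rfl⟩ := hc
  rw [Walk.edgeSet_toSubgraph, Walk.mem_edgeSet] at he
  have hu := w.fst_mem_support_of_mem_edges he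
  obtain ⟨w', hw', hl', he', hw'w⟩ : ∃ w' : G.Walk u u, w'.IsCycle ∧ w'.length = 5 ∧
      s(u, v) ∈ w'.edges ∧ w'.toSubgraph = w.toSubgraph :=
    ⟨w.rotate u hu, Walk.IsCycle.rotate hu hw, by rw [Walk.length_rotate, hl],
      (w.rotate_edges u hu).mem_iff.mpr he, w.toSubgraph_rotate hu⟩
  rw [← hw'w]
  rcases w' with _ | ⟨h1, _ | ⟨h2, _ | ⟨h3, _ | ⟨h4, _ | ⟨h5, _ | ⟨h6, w'⟩⟩⟩⟩⟩⟩ <;>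
    simp at hl'
  rename_i x1 x2 x3 x4
  have hnodup := hw'.support_nodup
  simp only [Walk.support_cons, Walk.support_nil, List.tail_cons, List.nodup_cons, List.mem_cons,
    List.not_mem_nil, or_false, List.nodup_nil, and_true, not_or] at hnodup
  simp only [Walk.edges_cons, Walk.edges_nil, List.mem_cons, List.not_mem_nil, or_false,
    Sym2.eq_iff] at he'
  -- `u` occurs only at the ends of the rotated cycle, so `uv` is its first or last edge
  obtain rfl | rfl : v = x1 ∨ v = x4 := by grind
  · exact ⟨(x4, x3, x2), ⟨h5.symm, h4.symm, h3.symm, h2.symm⟩, rfl⟩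
  · exact ⟨(x1, x2, x3), ⟨h1, h2, h3, h4⟩, by rw [← Walk.toSubgraph_reverse (.cons h1 _)]; rfl⟩

lemma ncard_pentagons_eq_ncard_fourPaths (hG : 4 ≤ G.egirth) (huv : G.Adj u v) :
    {c : G.Subgraph | IsCycleSub G 5 c ∧ s(u, v) ∈ c.edgeSet}.ncard =
      (fourPaths G u v).ncard := by
  have hrange : {c : G.Subgraph | IsCycleSub G 5 c ∧ s(u, v) ∈ c.edgeSet} =
      range fun t : fourPaths G u v => (pentagon huv t.2).toSubgraph := by
    ext c
    constructor
    · rintro ⟨hc, he⟩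
      obtain ⟨t, ht, rfl⟩ := exists_pentagon_eq huv hc he
      exact ⟨⟨t, ht⟩, rfl⟩
    · rintro ⟨⟨t, ht⟩, rfl⟩
      refine ⟨⟨u, _, pentagon_isCycle hG huv ht, rfl, rfl⟩, ?_⟩
      rw [Walk.edgeSet_toSubgraph, Walk.mem_edgeSet]
      exact ((mem_edges_pentagon hG huv ht v).1).mpr (.inl rfl)
  rw [hrange, ncard_range_of_injective, Nat.card_coe_set_eq]
  rintro ⟨t, ht⟩ ⟨t', ht'⟩ h
  exact Subtype.ext (pentagon_toSubgraph_injective hG huv ht ht' h)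

/-- The local conditions of an egr(·, k, 5, lam)-graph: by
`ncard_pentagons_eq_ncard_fourPaths`, `ncard_fourPaths` says that every edge lies on `lam`
pentagons. -/
structure PentagonRegular (G : SimpleGraph V) (k lam : ℕ) : Prop where
  five_le_egirth : 5 ≤ G.egirth
  finite_neighborSet (x : V) : (G.neighborSet x).Finite
  ncard_neighborSet (x : V) : (G.neighborSet x).ncard = k
  ncard_fourPaths ⦃u v : V⦄ : G.Adj u v → (fourPaths G u v).ncard = lam

namespace PentagonRegular

variable {k lam : ℕ}

lemma four_le_egirth (h : PentagonRegular G k lam) : 4 ≤ G.egirth :=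
  le_trans (by norm_num) h.five_le_egirth

lemma not_adj (h : PentagonRegular G k lam) (hxy : G.Adj x y) (hyz : G.Adj y z) : ¬ G.Adj x z :=
  not_adj_of_four_le_egirth h.four_le_egirth hxy hyz

lemma eq_of_adj (h : PentagonRegular G k lam) (hxz : x ≠ z) (hxy : G.Adj x y) (hyz : G.Adj y z)
    (hxw : G.Adj x w) (hwz : G.Adj w z) : y = w :=
  eq_of_adj_of_five_le_egirth h.five_le_egirth hxz hxy hyz hxw hwz

lemma of_isEGR {n : ℕ} (hE : IsEGR G n k 5 lam) (hk : k ≠ 0) : PentagonRegular G k lam := by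
  obtain ⟨-, hreg, hgirth, hcycles⟩ := hE
  have h5 : 5 ≤ G.egirth := ((ENat.toNat_eq_iff (by norm_num)).mp hgirth).ge
  refine ⟨h5, fun x => finite_of_ncard_ne_zero (by rw [hreg x]; exact hk), hreg,
    fun u v huv => ?_⟩
  rw [← ncard_pentagons_eq_ncard_fourPaths (le_trans (by norm_num) h5) huv]
  exact hcycles _ huv

lemma isEGR [Nonempty V] (h : PentagonRegular G k lam) (hk : k ≠ 0) (hlam : lam ≠ 0) :
    IsEGR G (Nat.card V) k 5 lam := by
  have hcycles ⦃u v : V⦄ (huv : G.Adj u v) :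
      {c : G.Subgraph | IsCycleSub G 5 c ∧ s(u, v) ∈ c.edgeSet}.ncard = lam :=
    (ncard_pentagons_eq_ncard_fourPaths h.four_le_egirth huv).trans (h.ncard_fourPaths huv)
  refine ⟨rfl, h.ncard_neighborSet, ?_, fun e he => ?_⟩
  · obtain ⟨u⟩ := ‹Nonempty V›
    obtain ⟨v, huv⟩ := nonempty_of_ncard_ne_zero (s := G.neighborSet u)
      (by rw [h.ncard_neighborSet]; exact hk)
    obtain ⟨c, ⟨x, w, hw, hl, -⟩, -⟩ := nonempty_of_ncard_ne_zero (by rw [hcycles huv]; exact hlam)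
    have : G.egirth = 5 := le_antisymm (hl ▸ egirth_le_length hw :) h.five_le_egirth
    rw [girth, this]
    rfl
  · induction e using Sym2.ind
    exact hcycles he

end PentagonRegular

section Induce

variable {S : Set V}

lemma ncard_neighborSet_induce (hS : ∀ ⦃x y⦄, x ∈ S → G.Adj x y → y ∈ S) (x : S) :
    ((G.induce S).neighborSet x).ncard = (G.neighborSet x).ncard :=
  ncard_preimage_of_injective_subset_range Subtype.val_injective
    fun y hxy => ⟨⟨y, hS x.2 hxy⟩, rfl⟩

lemma ncard_fourPaths_induce (hS : ∀ ⦃x y⦄, x ∈ S → G.Adj x y → y ∈ S) (x y : S) :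
    (fourPaths (G.induce S) x y).ncard = (fourPaths G x y).ncard := by
  refine ncard_preimage_of_injective_subset_range (s := fourPaths G x y) (f := Prod.map Subtype.val
    (Prod.map Subtype.val Subtype.val)) (Subtype.val_injective.prodMap
      (Subtype.val_injective.prodMap Subtype.val_injective)) ?_
  rintro ⟨a, b, c⟩ ⟨h1, h2, h3, -⟩
  have ha := hS x.2 h1
  have hb := hS ha h2
  exact ⟨(⟨a, ha⟩, ⟨b, hb⟩, ⟨c, hS hb h3⟩), rfl⟩

lemma PentagonRegular.induce {k lam : ℕ} (h : PentagonRegular G k lam)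
    (hS : ∀ ⦃x y⦄, x ∈ S → G.Adj x y → y ∈ S) : PentagonRegular (G.induce S) k lam where
  five_le_egirth := h.five_le_egirth.trans (IsContained.egirth_le ⟨Copy.induce G S⟩)
  finite_neighborSet x := (h.finite_neighborSet x).preimage Subtype.val_injective.injOn
  ncard_neighborSet x := (ncard_neighborSet_induce hS x).trans (h.ncard_neighborSet x)
  ncard_fourPaths x y hxy := (ncard_fourPaths_induce hS x y).trans (h.ncard_fourPaths hxy)

end Induce

def sphere2 (G : SimpleGraph V) (u : V) : Set V :=
  {x | x ≠ u ∧ ¬ G.Adj u x ∧ ∃ a, G.Adj u a ∧ G.Adj a x}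

def sphere3 (G : SimpleGraph V) (u : V) : Set V :=
  {x | x ≠ u ∧ ¬ G.Adj u x ∧ x ∉ sphere2 G u ∧ ∃ b ∈ sphere2 G u, G.Adj b x}

def ball3 (G : SimpleGraph V) (u : V) : Set V :=
  insert u (G.neighborSet u ∪ sphere2 G u ∪ sphere3 G u)

def opposite (G : SimpleGraph V) (u v : V) : Set V :=
  (fun t => t.2.1) '' fourPaths G u v

def far (G : SimpleGraph V) (u v : V) : Set V :=
  {x | x ∈ sphere2 G u ∧ ¬ G.Adj v x ∧ ∀ c, G.Adj x c → ¬ G.Adj c v}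

lemma mem_far_of_mem_sphere3 {a c : V} (hua : G.Adj u a) (hac : G.Adj a c)
    (hcz : G.Adj c z) (hz : z ∈ sphere3 G u) : z ∈ far G a u := by
  obtain ⟨hzu, hnuz, hz2, -⟩ := hz
  refine ⟨⟨?_, fun haz => hz2 ⟨hzu, hnuz, a, hua, haz⟩, c, hac, hcz⟩, hnuz,
    fun c' hzc' hc'u => hz2 ⟨hzu, hnuz, c', hc'u.symm, hzc'.symm⟩⟩
  rintro rfl
  exact hnuz hua

namespace PentagonRegular

variable {k lam : ℕ} {a b c : V}

lemma mem_sphere2 (h : PentagonRegular G k lam) (hua : G.Adj u a) (hax : G.Adj a x)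
    (hxu : x ≠ u) : x ∈ sphere2 G u :=
  ⟨hxu, h.not_adj hua hax, a, hua, hax⟩

lemma sphere2_eq_biUnion (h : PentagonRegular G k lam) (u : V) :
    sphere2 G u = ⋃ a ∈ G.neighborSet u, G.neighborSet a \ {u} := by
  ext x
  simp only [mem_iUnion, mem_sdiff, mem_neighborSet, mem_singleton_iff, exists_prop]
  refine ⟨fun ⟨hxu, _, a, hua, hax⟩ => ⟨a, hua, hax, hxu⟩, fun ⟨a, hua, hax, hxu⟩ => ?_⟩
  exact h.mem_sphere2 hua hax hxu

lemma finite_sphere2 (h : PentagonRegular G k lam) (u : V) : (sphere2 G u).Finite := by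
  rw [h.sphere2_eq_biUnion u]
  exact (h.finite_neighborSet u).biUnion fun a _ => (h.finite_neighborSet a).sdiff

lemma ncard_sphere2 (h : PentagonRegular G k lam) (u : V) :
    (sphere2 G u).ncard = k * (k - 1) := by
  have hdisj : (G.neighborSet u).PairwiseDisjoint fun a => G.neighborSet a \ {u} := by
    refine fun a hua a' hua' hne => Set.disjoint_left.mpr fun x hx hx' => hne ?_
    exact h.eq_of_adj (Ne.symm hx.2) hua hx.1 hua' hx'.1
  have hfiber : ∀ a ∈ G.neighborSet u, (G.neighborSet a \ {u}).ncard = 1 * (k - 1) := by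
    intro a hua
    rw [ncard_sdiff_singleton_of_mem (G.mem_neighborSet _ _ |>.mpr hua.symm),
      h.ncard_neighborSet, one_mul]
  rw [h.sphere2_eq_biUnion u, (h.finite_neighborSet u).ncard_biUnion
    (fun a _ => (h.finite_neighborSet a).sdiff) hdisj, finsum_mem_congr rfl hfiber,
    ← finsum_mem_mul, finsum_one, h.ncard_neighborSet]

lemma ncard_opposite (h : PentagonRegular G k lam) (huv : G.Adj u v) :
    (opposite G u v).ncard = lam := by
  refine (InjOn.ncard_image ?_).trans (h.ncard_fourPaths huv)
  rintro ⟨a, b, c⟩ ⟨h1, h2, h3, h4⟩ ⟨a', b', c'⟩ ⟨h1', h2', h3', h4'⟩ (rfl : b = b')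
  have hb := ne_of_mem_fourPaths h.four_le_egirth huv ⟨h1, h2, h3, h4⟩
  obtain rfl := h.eq_of_adj (Ne.symm hb.2.1) h1 h2 h1' h2'
  obtain rfl := h.eq_of_adj hb.2.2.1 h3 h4 h3' h4'
  rfl

lemma sphere2_eq_union (h : PentagonRegular G k lam) (huv : G.Adj u v) :
    sphere2 G u = (G.neighborSet v \ {u}) ∪ opposite G u v ∪ far G u v := by
  ext x
  refine ⟨fun hx => ?_, ?_⟩
  · by_cases hvx : G.Adj v x
    · exact .inl (.inl ⟨hvx, hx.1⟩)
    by_cases hopp : ∃ c, G.Adj x c ∧ G.Adj c v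
    · obtain ⟨c, hxc, hcv⟩ := hopp
      obtain ⟨-, -, a, hua, hax⟩ := hx
      exact .inl (.inr ⟨(a, x, c), ⟨hua, hax, hxc, hcv⟩, rfl⟩)
    · push Not at hopp
      exact .inr ⟨hx, hvx, hopp⟩
  · rintro ((⟨hvx, hxu⟩ | ⟨t, ht, rfl⟩) | hx)
    · exact h.mem_sphere2 huv hvx hxu
    · exact h.mem_sphere2 ht.1 ht.2.1
        (ne_of_mem_fourPaths h.four_le_egirth huv ht).2.1
    · exact hx.1

lemma ncard_far_add (h : PentagonRegular G k lam) (huv : G.Adj u v) :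
    (far G u v).ncard + lam + (k - 1) = k * (k - 1) := by
  have hfin := h.finite_sphere2 u
  have hpart := h.sphere2_eq_union huv
  have hfin₁ : (G.neighborSet v \ {u}).Finite := (h.finite_neighborSet v).sdiff
  have hfin₂ : (opposite G u v).Finite :=
    hfin.subset (hpart ▸ subset_union_right.trans subset_union_left)
  have hfin₃ : (far G u v).Finite := hfin.subset fun x hx => hx.1
  have hdisj₁ : Disjoint (G.neighborSet v \ {u}) (opposite G u v) := by
    rw [Set.disjoint_left]
    rintro x ⟨hvx, -⟩ ⟨⟨a, b, c⟩, ⟨-, -, hbc, hcv⟩, rfl⟩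
    exact h.not_adj hbc hcv hvx.symm
  have hdisj₂ : Disjoint (G.neighborSet v \ {u} ∪ opposite G u v) (far G u v) := by
    rw [Set.disjoint_left]
    rintro x (⟨hvx, -⟩ | ⟨⟨a, b, c⟩, ⟨-, -, hbc, hcv⟩, rfl⟩) ⟨-, hnvx, hnc⟩
    · exact hnvx hvx
    · exact hnc c hbc hcv
  rw [← h.ncard_sphere2 u, hpart, ncard_union_eq hdisj₂ (hfin₁.union hfin₂) hfin₃,
    ncard_union_eq hdisj₁ hfin₁ hfin₂, h.ncard_opposite huv,
    ncard_sdiff_singleton_of_mem ((G.mem_neighborSet _ _).mpr huv.symm), h.ncard_neighborSet]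
  ring

lemma ncard_far (h : PentagonRegular G k lam) (hlam : lam + 1 = (k - 1) ^ 2) (huv : G.Adj u v) :
    (far G u v).ncard = 1 := by
  have := h.ncard_far_add huv
  obtain _ | k := k
  · simp at hlam
  · simp only [add_tsub_cancel_right] at this hlam
    nlinarith

lemma far_subsingleton (h : PentagonRegular G k lam) (hlam : lam + 1 = (k - 1) ^ 2)
    (huv : G.Adj u v) : (far G u v).Subsingleton := by
  obtain ⟨x, hx⟩ := ncard_eq_one.mp (h.ncard_far hlam huv)
  exact hx ▸ subsingleton_singleton

lemma far_nonempty (h : PentagonRegular G k lam) (hlam : lam + 1 = (k - 1) ^ 2)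
    (huv : G.Adj u v) : (far G u v).Nonempty :=
  nonempty_of_ncard_ne_zero (by rw [h.ncard_far hlam huv]; exact one_ne_zero)

lemma far_subset_sphere3 (h : PentagonRegular G k lam) (hua : G.Adj u a) :
    far G a u ⊆ sphere3 G u := by
  rintro y ⟨⟨hya, hnay, c, hac, hcy⟩, hnuy, hnc⟩
  have hyu : y ≠ u := by rintro rfl; exact hnay hua.symm
  refine ⟨hyu, hnuy, fun ⟨_, _, a', hua', ha'y⟩ => hnc a' ha'y.symm hua'.symm, c, ?_, hcy⟩
  exact h.mem_sphere2 hua hac (by rintro rfl; exact hnuy hcy)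

lemma eq_of_adj_of_mem_sphere3 (h : PentagonRegular G k lam) (hlam : lam + 1 = (k - 1) ^ 2)
    (hua : G.Adj u a) {c c' z z' : V} (hac : G.Adj a c) (hcz : G.Adj c z)
    (hz : z ∈ sphere3 G u) (hac' : G.Adj a c') (hcz' : G.Adj c' z')
    (hz' : z' ∈ sphere3 G u) : c = c' ∧ z = z' := by
  obtain rfl : z = z' := h.far_subsingleton hlam hua.symm
    (mem_far_of_mem_sphere3 hua hac hcz hz) (mem_far_of_mem_sphere3 hua hac' hcz' hz')
  refine ⟨h.eq_of_adj ?_ hac hcz hac' hcz', rfl⟩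
  rintro rfl
  exact hz.2.1 hua

/-- `u` is the vertex of `far G b z`, so `x` has a common neighbour `q` with `z`; and `q` is not in
the third sphere, whose only edge from `G.neighborSet a \ {u}` is `bz`. -/
lemma exists_adj_of_mem_sphere3 (h : PentagonRegular G k lam) (hlam : lam + 1 = (k - 1) ^ 2)
    (hua : G.Adj u a) (hab : G.Adj a b) (hb : b ∈ sphere2 G u) (hbz : G.Adj b z)
    (hz : z ∈ sphere3 G u) (hx : x ∈ G.neighborSet a \ {u, b}) :
    ∃ q ∈ (G.neighborSet z ∩ sphere2 G u) \ {b}, G.Adj x q := by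
  obtain ⟨hax, hx⟩ := hx
  simp only [mem_insert_iff, mem_singleton_iff, not_or] at hx
  obtain ⟨hxu, hxb⟩ := hx
  have haz : a ≠ z := by rintro rfl; exact hz.2.1 hua
  have hu : u ∈ far G b z :=
    ⟨h.mem_sphere2 hab.symm hua.symm hb.1.symm, fun hzu => hz.2.1 hzu.symm,
      fun c huc hcz => hz.2.2.1 (h.mem_sphere2 huc hcz hz.1)⟩
  have hzx : ¬ G.Adj z x := fun hzx => hxb (h.eq_of_adj haz hab hbz hax hzx.symm).symm
  obtain ⟨q, hxq, hqz⟩ : ∃ q, G.Adj x q ∧ G.Adj q z := by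
    by_contra! hne
    exact hxu (h.far_subsingleton hlam hbz ⟨h.mem_sphere2 hab.symm hax hxb, hzx, hne⟩ hu)
  have hq : q ∈ sphere2 G u := by
    by_contra hq
    have hqu : q ≠ u := by rintro rfl; exact hz.2.1 hqz
    have hnuq : ¬ G.Adj u q := fun huq => hz.2.2.1 (h.mem_sphere2 huq hqz hz.1)
    have hq3 : q ∈ sphere3 G u := ⟨hqu, hnuq, hq, x, h.mem_sphere2 hua hax hxu, hxq⟩
    exact hxb (h.eq_of_adj_of_mem_sphere3 hlam hua hax hxq hq3 hab hbz hz).1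
  refine ⟨q, ⟨⟨hqz.symm, hq⟩, ?_⟩, hxq⟩
  rintro rfl
  exact h.not_adj hax hxq hab

lemma sub_one_le_ncard_neighborSet_inter_sphere2 (h : PentagonRegular G k lam)
    (hlam : lam + 1 = (k - 1) ^ 2) (hz : z ∈ sphere3 G u) :
    k - 1 ≤ (G.neighborSet z ∩ sphere2 G u).ncard := by
  obtain ⟨-, -, -, b, hb, hbz⟩ := id hz
  obtain ⟨hbu, -, a, hua, hab⟩ := id hb
  have hs : (G.neighborSet a \ {u, b}).ncard = k - 2 := by
    rw [ncard_sdiff (by simp [pair_subset_iff, hua.symm, hab]), h.ncard_neighborSet,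
      ncard_pair hbu.symm]
  have ht : ((G.neighborSet z ∩ sphere2 G u) \ {b}).ncard =
      (G.neighborSet z ∩ sphere2 G u).ncard - 1 :=
    ncard_sdiff_singleton_of_mem ⟨hbz.symm, hb⟩
  have hle := ncard_le_ncard_of_exists_rel G.Adj
    (fun x hx => h.exists_adj_of_mem_sphere3 hlam hua hab hb hbz hz hx)
    (fun x hx x' hx' q hq hxq hx'q => h.eq_of_adj (by rintro rfl; exact hq.1.2.2.1 hua)
      hx.1 hxq hx'.1 hx'q)
    (((h.finite_neighborSet z).subset inter_subset_left).sdiff)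
  have hpos : 0 < (G.neighborSet z ∩ sphere2 G u).ncard :=
    (ncard_pos ((h.finite_neighborSet z).subset inter_subset_left)).mpr ⟨b, hbz.symm, hb⟩
  omega

lemma sphere3_subsingleton (h : PentagonRegular G k lam) (hlam : lam + 1 = (k - 1) ^ 2)
    (hk : 3 ≤ k) (u : V) : (sphere3 G u).Subsingleton := by
  intro z hz z' hz'
  by_contra hne
  have hs := h.sub_one_le_ncard_neighborSet_inter_sphere2 hlam hz
  have hs' := h.sub_one_le_ncard_neighborSet_inter_sphere2 hlam hz'
  set s := G.neighborSet z ∩ sphere2 G u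
  set s' := G.neighborSet z' ∩ sphere2 G u
  have hmem : ∀ c ∈ s ∪ s', c ∈ sphere2 G u ∧ ∃ y ∈ sphere3 G u, G.Adj c y := by
    rintro c (⟨hzc, hc⟩ | ⟨hzc, hc⟩)
    exacts [⟨hc, z, hz, hzc.symm⟩, ⟨hc, z', hz', hzc.symm⟩]
  have hfin : s.Finite := (h.finite_neighborSet z).subset inter_subset_left
  have hfin' : s'.Finite := (h.finite_neighborSet z').subset inter_subset_left
  have hdisj : Disjoint s s' := by
    refine Set.disjoint_left.mpr fun c ⟨hzc, hc⟩ ⟨hz'c, _⟩ => hne ?_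
    obtain ⟨-, -, a, hua, hac⟩ := hc
    exact (h.eq_of_adj_of_mem_sphere3 hlam hua hac hzc.symm hz hac hz'c.symm hz').2
  have hle := ncard_le_ncard_of_exists_rel (s := s ∪ s') (t := G.neighborSet u)
    (fun c a => G.Adj a c)
    (fun c hc => (hmem c hc).1.2.2)
    (fun c hc c' hc' a hua hac hac' => by
      obtain ⟨-, y, hy, hcy⟩ := hmem c hc
      obtain ⟨-, y', hy', hc'y'⟩ := hmem c' hc'
      exact (h.eq_of_adj_of_mem_sphere3 hlam hua hac hcy hy hac' hc'y' hy').1)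
    (h.finite_neighborSet u)
  rw [ncard_union_eq hdisj hfin hfin', h.ncard_neighborSet] at hle
  omega

lemma neighborSet_subset_sphere2 (h : PentagonRegular G k lam) (hlam : lam + 1 = (k - 1) ^ 2)
    (hk : 3 ≤ k) (hz : z ∈ sphere3 G u) : G.neighborSet z ⊆ sphere2 G u := by
  have hfin : (G.neighborSet z ∩ sphere2 G u).Finite :=
    (h.finite_neighborSet z).subset inter_subset_left
  have hle : (G.neighborSet u).ncard ≤ (G.neighborSet z ∩ sphere2 G u).ncard := by
    refine ncard_le_ncard_of_exists_rel G.Adj (fun a hua => ?_)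
      (fun a hua a' hua' c hc hac ha'c => h.eq_of_adj hc.2.1.symm hua hac hua' ha'c) hfin
    obtain ⟨y, hy⟩ := h.far_nonempty hlam hua.symm
    obtain rfl : y = z := h.sphere3_subsingleton hlam hk u (h.far_subset_sphere3 hua hy) hz
    obtain ⟨⟨-, -, c, hac, hcy⟩, hnuy, -⟩ := hy
    exact ⟨c, ⟨hcy.symm, h.mem_sphere2 hua hac (by rintro rfl; exact hnuy hcy)⟩, hac⟩
  rw [h.ncard_neighborSet, ← h.ncard_neighborSet z] at hle
  rw [← eq_of_subset_of_ncard_le inter_subset_left hle (h.finite_neighborSet z)]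
  exact inter_subset_right

lemma sphere3_nonempty (h : PentagonRegular G k lam) (hlam : lam + 1 = (k - 1) ^ 2)
    (hk : 3 ≤ k) (u : V) : (sphere3 G u).Nonempty := by
  obtain ⟨a, hua⟩ := nonempty_of_ncard_ne_zero (s := G.neighborSet u)
    (by rw [h.ncard_neighborSet]; omega)
  exact (h.far_nonempty hlam hua.symm).mono (h.far_subset_sphere3 hua)

lemma mem_ball3_of_adj (h : PentagonRegular G k lam) (hlam : lam + 1 = (k - 1) ^ 2)
    (hk : 3 ≤ k) (hx : x ∈ ball3 G u) (hxy : G.Adj x y) : y ∈ ball3 G u := by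
  simp only [ball3, mem_insert_iff, mem_union, mem_neighborSet] at hx ⊢
  by_cases hyu : y = u
  · exact .inl hyu
  rcases hx with rfl | (hux | hx) | hx
  · exact .inr (.inl (.inl hxy))
  · exact .inr (.inl (.inr (h.mem_sphere2 hux hxy hyu)))
  · by_cases huy : G.Adj u y
    · exact .inr (.inl (.inl huy))
    by_cases hy : y ∈ sphere2 G u
    · exact .inr (.inl (.inr hy))
    · exact .inr (.inr ⟨hyu, huy, hy, x, hx, hxy⟩)
  · exact .inr (.inl (.inr (h.neighborSet_subset_sphere2 hlam hk hx hxy)))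

lemma ncard_ball3 (h : PentagonRegular G k lam) (hlam : lam + 1 = (k - 1) ^ 2) (hk : 3 ≤ k)
    (u : V) : (ball3 G u).ncard = k ^ 2 + 2 := by
  obtain ⟨z, hz⟩ := h.sphere3_nonempty hlam hk u
  have h3 : sphere3 G u = {z} := (h.sphere3_subsingleton hlam hk u).eq_singleton_of_mem hz
  have hfin₁ := h.finite_neighborSet u
  have hfin₂ := h.finite_sphere2 u
  have hdisj₁ : Disjoint (G.neighborSet u) (sphere2 G u) :=
    Set.disjoint_left.mpr fun x hux hx => hx.2.1 hux
  have hdisj₂ : Disjoint (G.neighborSet u ∪ sphere2 G u) (sphere3 G u) :=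
    Set.disjoint_left.mpr fun x hx hx3 => hx.elim hx3.2.1 hx3.2.2.1
  have hu : u ∉ G.neighborSet u ∪ sphere2 G u ∪ sphere3 G u := by
    rintro ((hu | hu) | hu)
    exacts [G.irrefl hu, hu.1 rfl, hu.1 rfl]
  rw [ball3, ncard_insert_of_notMem hu ((hfin₁.union hfin₂).union (h3 ▸ finite_singleton z)),
    ncard_union_eq hdisj₂ (hfin₁.union hfin₂) (h3 ▸ finite_singleton z),
    ncard_union_eq hdisj₁ hfin₁ hfin₂, h.ncard_neighborSet, h.ncard_sphere2, h3, ncard_singleton]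
  obtain _ | k := k
  · omega
  · simp only [add_tsub_cancel_right]
    ring

theorem isEGR_induce_ball3 (h : PentagonRegular G k lam) (hlam : lam + 1 = (k - 1) ^ 2)
    (hk : 3 ≤ k) (u : V) : IsEGR (G.induce (ball3 G u)) (k ^ 2 + 2) k 5 lam := by
  have : Nonempty (ball3 G u) := ⟨⟨u, mem_insert u _⟩⟩
  have hlam0 : lam ≠ 0 := by
    have : 2 ^ 2 ≤ (k - 1) ^ 2 := Nat.pow_le_pow_left (by omega) 2
    omega
  have hE :=
    (h.induce (S := ball3 G u) fun _ _ => h.mem_ball3_of_adj hlam hk).isEGR (by omega) hlam0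
  rwa [Nat.card_coe_set_eq, h.ncard_ball3 hlam hk] at hE

end PentagonRegular

end EGR

/-- There is no egr(v,6,5,24)-graph (using the known fact that there is no such graph on
38 vertices). -/
theorem stmt_15
    (known : ∀ (W : Type) (H : SimpleGraph W), ¬ IsEGR H 38 6 5 24) :
    ¬ ∃ (V : Type) (G : SimpleGraph V) (v : ℕ), IsEGR G v 6 5 24 := by
  rintro ⟨V, G, v, hE⟩
  obtain ⟨u, -⟩ := (exists_girth_eq_length (G := G)).mpr fun hG => by
    simpa [hG.girth_eq_zero] using hE.2.2.1
  exact known _ _ ((EGR.PentagonRegular.of_isEGR hE (by norm_num)).isEGR_induce_ball3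
    (by norm_num) (by norm_num) u)
end

section
/- Let G be an egr(v,3,7,6)-graph, v₀ a vertex of G, and B the induced subgraph on the vertices at distance exactly 3 from v₀. Then no edge of B connects two vertices lying in the same branch, where a branch consists of all vertices of B whose unique shortest path to v₀ passes through a fixed neighbor of v₀. -/
open SimpleGraph

/-- Any cycle in a graph of girth 7 has length at least 7. -/
lemma girth_seven_cycle_le {V : Type*} {G : SimpleGraph V} (hg : G.girth = 7)
    {a : V} (w : G.Walk a a) (hw : w.IsCycle) : 7 ≤ w.length := by
  have hne : G.egirth ≠ ⊤ := by
    intro h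
    rw [SimpleGraph.girth, h] at hg
    simp at hg
  have he : G.egirth = (7 : ℕ∞) := by
    rw [SimpleGraph.girth] at hg
    exact_mod_cast (ENat.toNat_eq_iff (by norm_num)).mp hg
  have := SimpleGraph.le_egirth.mp (le_of_eq he.symm) a w hw
  exact_mod_cast this

/-- In a connected egr(v,3,7,6)-graph, no edge between two vertices at distance 3 from v₀
connects two vertices of the same branch (i.e. whose shortest paths to them from v₀ pass
through the same neighbor of v₀). -/
theorem stmt_18 {V : Type*} (G : SimpleGraph V) (v : ℕ)
    (hG : IsEGR G v 3 7 6) (hconn : G.Connected) (v₀ : V)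
    (n : V) (hn : G.Adj v₀ n)
    (x y : V) (hx : G.dist v₀ x = 3) (hy : G.dist v₀ y = 3)
    (hxbranch : ∀ w : G.Walk v₀ x, w.length = 3 → n ∈ w.support)
    (hybranch : ∀ w : G.Walk v₀ y, w.length = 3 → n ∈ w.support) :
    ¬ G.Adj x y := by
  intro hadj
  obtain ⟨_, _, hgirth, _⟩ := hG
  have hdvn : G.dist v₀ n ≤ 1 := by
    simpa using G.dist_le hn.toWalk
  -- key: dist from n to a branch vertex is 2
  have key : ∀ z : V, G.dist v₀ z = 3 →
      (∀ w : G.Walk v₀ z, w.length = 3 → n ∈ w.support) → G.dist n z = 2 := by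
    intro z hz hbr
    obtain ⟨p, hp⟩ := (hconn.preconnected v₀ z).exists_walk_length_eq_dist
    rw [hz] at hp
    obtain ⟨q, r, hqr⟩ := SimpleGraph.Walk.mem_support_iff_exists_append.mp
      (hbr p (by omega))
    have hlen : q.length + r.length = 3 := by
      rw [hqr] at hp; simpa using hp
    have hq1 : 1 ≤ q.length := by
      rcases Nat.eq_zero_or_pos q.length with h | h
      · exact absurd (SimpleGraph.Walk.eq_of_length_eq_zero h) hn.ne
      · exact h
    have hle : G.dist n z ≤ 2 := le_trans (G.dist_le r) (by omega)
    have hge : 2 ≤ G.dist n z := by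
      have ht := hconn.dist_triangle (u := v₀) (v := n) (w := z)
      omega
    omega
  have hnx : G.dist n x = 2 := key x hx hxbranch
  have hny : G.dist n y = 2 := key y hy hybranch
  -- extract the middle vertices
  have hstep : ∀ z : V, G.dist n z = 2 → ∃ c : V, G.Adj n c ∧ G.Adj c z := by
    intro z hz
    obtain ⟨p, hp⟩ := (hconn.preconnected n z).exists_walk_length_eq_dist
    rw [hz] at hp
    refine ⟨p.getVert 1, ?_, ?_⟩
    · have := p.adj_getVert_succ (i := 0) (by omega)
      simpa using this
    · have := p.adj_getVert_succ (i := 1) (by omega)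
      rw [show (1 + 1 : ℕ) = p.length by omega, p.getVert_length] at this
      exact this
  obtain ⟨a, hna, hax⟩ := hstep x hnx
  obtain ⟨b, hnb, hby⟩ := hstep y hny
  -- distance facts for distinctness
  have hdva : G.dist v₀ a ≤ 2 := by
    have h1 : G.dist n a ≤ 1 := by simpa using G.dist_le hna.toWalk
    have := hconn.dist_triangle (u := v₀) (v := n) (w := a)
    omega
  have hdvb : G.dist v₀ b ≤ 2 := by
    have h1 : G.dist n b ≤ 1 := by simpa using G.dist_le hnb.toWalk
    have := hconn.dist_triangle (u := v₀) (v := n) (w := b)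
    omega
  have hay : a ≠ y := fun h => by rw [h] at hdva; omega
  have hbx : b ≠ x := fun h => by rw [h] at hdvb; omega
  have hnx' : n ≠ x := fun h => by rw [h, SimpleGraph.dist_self] at hnx; omega
  have hny' : n ≠ y := fun h => by rw [h, SimpleGraph.dist_self] at hny; omega
  by_cases hab : a = b
  · -- triangle a - x - y - a
    subst hab
    have hya : G.Adj y a := hby.symm
    let t : G.Walk a a :=
      SimpleGraph.Walk.cons hax (SimpleGraph.Walk.cons hadj (SimpleGraph.Walk.cons hya .nil))
    have ht : t.IsCycle := by
      rw [SimpleGraph.Walk.isCycle_def]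
      refine ⟨?_, by simp [t], ?_⟩
      · rw [SimpleGraph.Walk.isTrail_def]
        simp [t, Sym2.eq_iff, hax.ne, hax.ne', hadj.ne, hadj.ne', hya.ne, hya.ne',
          hay, hay.symm]
      · simp [t, hadj.ne, hay, hay.symm, hax.ne, hax.ne']
    have := girth_seven_cycle_le hgirth t ht
    simp [t] at this
  · -- pentagon n - a - x - y - b - n
    let t : G.Walk n n :=
      SimpleGraph.Walk.cons hna (SimpleGraph.Walk.cons hax (SimpleGraph.Walk.cons hadj
        (SimpleGraph.Walk.cons hby.symm (SimpleGraph.Walk.cons hnb.symm .nil))))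
    have ht : t.IsCycle := by
      rw [SimpleGraph.Walk.isCycle_def]
      refine ⟨?_, by simp [t], ?_⟩
      · rw [SimpleGraph.Walk.isTrail_def]
        simp [t, Sym2.eq_iff, hna.ne, hna.ne', hax.ne, hax.ne', hadj.ne, hadj.ne',
          hby.ne, hby.ne', hnb.ne, hnb.ne', hay, hay.symm, hbx, hbx.symm,
          hnx', hnx'.symm, hny', hny'.symm, hab, (Ne.symm hab)]
      · simp [t, hna.ne, hna.ne', hax.ne, hax.ne', hadj.ne, hadj.ne',
          hby.ne, hby.ne', hnb.ne, hnb.ne', hay, hay.symm, hbx, hbx.symm,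
          hnx', hnx'.symm, hny', hny'.symm, hab, (Ne.symm hab)]
    have := girth_seven_cycle_le hgirth t ht
    simp [t] at this
end
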